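/- arXiv:2001.00730 — 11 statements merged into one kernel-verified Lean document; each statement's English description precedes it below -/
import Mathlib

section
/- Let θ₁, θ₂ > 0 be real numbers. Let A₁ be an n×n signed bipartite adjacency matrix with parts of sizes s and n−s satisfying A₁² = θ₁²·I_n, and let A₂ be an m×m signed adjacency matrix satisfying A₂² = θ₂²·I_m. Let 𝒜 = A₁⊗I_m + D⊗A₂ be the signed Cartesian product matrix. Then for every subset S of the mn row indices of 𝒜 with |S| = mn/2 + 1 (note mn is necessarily even), there exists u ∈ S such that #{v ∈ S : 𝒜_{uv} ≠ 0} ≥ √(θ₁² + θ₂²). -/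
open Matrix Kronecker

section Aux

variable {ι : Type*} [Fintype ι] [DecidableEq ι]

/-- An eigenvector of a matrix with small entries, supported on `S`, gives a vertex of `S`
with many neighbours in `S`. -/
lemma huang_degree_argument (θ : ℝ) (hθ : 0 < θ)
    (M : Matrix ι ι ℝ) (hent : ∀ u v, |M u v| ≤ 1)
    (S : Finset ι) (v : ι → ℝ) (hv : v ≠ 0)
    (hsupp : ∀ i, i ∉ S → v i = 0)
    (heig : M.mulVec v = θ • v) :
    ∃ u ∈ S, θ ≤ ((S.filter (fun w => M u w ≠ 0)).card : ℝ) := by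
  obtain ⟨i₀, hi₀⟩ := Function.ne_iff.mp hv
  rw [Pi.zero_apply] at hi₀
  obtain ⟨u, -, hu⟩ := Finset.exists_max_image Finset.univ (fun w => |v w|) ⟨i₀, Finset.mem_univ _⟩
  simp only [Finset.mem_univ, forall_true_left] at hu
  have hvu : 0 < |v u| := lt_of_lt_of_le (abs_pos.mpr hi₀) (hu i₀)
  have huS : u ∈ S := by
    by_contra h
    rw [hsupp u h] at hvu
    simp at hvu
  refine ⟨u, huS, ?_⟩
  set T : Finset ι := S.filter (fun w => M u w ≠ 0) with hT
  have key : θ * |v u| ≤ (T.card : ℝ) * |v u| := by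
    have h1 : θ * v u = ∑ w ∈ T, M u w * v w := by
      have h2 : θ * v u = ∑ w, M u w * v w := by
        have := congrFun heig u
        simp only [Matrix.mulVec, dotProduct, Pi.smul_apply, smul_eq_mul] at this
        rw [← this]
      rw [h2]
      refine (Finset.sum_subset (Finset.subset_univ T) ?_).symm
      intro w _ hw
      rw [hT, Finset.mem_filter, not_and_or, not_not] at hw
      rcases hw with hw | hw
      · rw [hsupp w hw, mul_zero]
      · rw [hw, zero_mul]
    calc θ * |v u| = |θ * v u| := by rw [abs_mul, abs_of_pos hθ]
      _ = |∑ w ∈ T, M u w * v w| := by rw [h1]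
      _ ≤ ∑ w ∈ T, |M u w * v w| := Finset.abs_sum_le_sum_abs _ _
      _ ≤ ∑ w ∈ T, |v u| := by
          refine Finset.sum_le_sum fun w _ => ?_
          rw [abs_mul]
          calc |M u w| * |v w| ≤ 1 * |v u| :=
                mul_le_mul (hent u w) (hu w) (abs_nonneg _) zero_le_one
            _ = |v u| := one_mul _
      _ = (T.card : ℝ) * |v u| := by rw [Finset.sum_const, nsmul_eq_mul]
  exact le_of_mul_le_mul_right key hvu

end Aux

/-- If `A₁` is an `n × n` signed bipartite adjacency matrix (parts of sizes `s` and `t = n - s`)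
with `A₁² = θ₁² I`, and `A₂` is an `m × m` signed adjacency matrix with `A₂² = θ₂² I`, then
every `(mn/2 + 1)`-vertex induced subgraph of the signed Cartesian product
`𝒜 = A₁ ⊗ I_m + D ⊗ A₂` has maximum degree at least `√(θ₁² + θ₂²)`. -/
theorem signed_cartesian_product_induced_subgraph_max_degree
    (s t m : ℕ) (θ₁ θ₂ : ℝ) (hθ₁ : 0 < θ₁) (hθ₂ : 0 < θ₂)
    (P : Matrix (Fin s) (Fin t) ℝ)
    (hP : ∀ i j, P i j = -1 ∨ P i j = 0 ∨ P i j = 1)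
    (A₂ : Matrix (Fin m) (Fin m) ℝ)
    (hA₂symm : A₂.IsSymm) (hA₂diag : ∀ i, A₂ i i = 0)
    (hA₂ent : ∀ i j, A₂ i j = -1 ∨ A₂ i j = 0 ∨ A₂ i j = 1)
    (A₁ : Matrix (Fin s ⊕ Fin t) (Fin s ⊕ Fin t) ℝ)
    (hA₁ : A₁ = Matrix.fromBlocks 0 P Pᵀ 0)
    (hA₁sq : A₁ * A₁ = (θ₁ ^ 2) • (1 : Matrix (Fin s ⊕ Fin t) (Fin s ⊕ Fin t) ℝ))
    (hA₂sq : A₂ * A₂ = (θ₂ ^ 2) • (1 : Matrix (Fin m) (Fin m) ℝ))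
    (D : Matrix (Fin s ⊕ Fin t) (Fin s ⊕ Fin t) ℝ)
    (hD : D = Matrix.fromBlocks 1 0 0 (-1))
    (𝒜 : Matrix ((Fin s ⊕ Fin t) × Fin m) ((Fin s ⊕ Fin t) × Fin m) ℝ)
    (h𝒜 : 𝒜 = A₁ ⊗ₖ (1 : Matrix (Fin m) (Fin m) ℝ) + D ⊗ₖ A₂)
    (S : Finset ((Fin s ⊕ Fin t) × Fin m))
    (hS : 2 * S.card = m * (s + t) + 2) :
    ∃ u ∈ S, Real.sqrt (θ₁ ^ 2 + θ₂ ^ 2) ≤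
      ((S.filter (fun v => 𝒜 u v ≠ 0)).card : ℝ) := by
  classical
  set θ : ℝ := Real.sqrt (θ₁ ^ 2 + θ₂ ^ 2) with hθdef
  have hsum_pos : (0:ℝ) < θ₁ ^ 2 + θ₂ ^ 2 := by positivity
  have hθ : 0 < θ := Real.sqrt_pos.mpr hsum_pos
  have hθsq : θ ^ 2 = θ₁ ^ 2 + θ₂ ^ 2 := Real.sq_sqrt hsum_pos.le
  -- entries of A₁ are in {-1, 0, 1}
  have hA₁ent : ∀ a b, A₁ a b = -1 ∨ A₁ a b = 0 ∨ A₁ a b = 1 := by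
    rintro (a | a) (b | b)
    · simp [hA₁]
    · simpa [hA₁] using hP a b
    · simpa [hA₁] using hP b a
    · simp [hA₁]
  have hDent : ∀ a b, D a b = -1 ∨ D a b = 0 ∨ D a b = 1 := by
    rintro (a | a) (b | b)
    · rcases eq_or_ne a b with h | h <;> simp [hD, Matrix.one_apply, h]
    · simp [hD]
    · simp [hD]
    · rcases eq_or_ne a b with h | h <;> simp [hD, Matrix.one_apply, h]
  -- entries of 𝒜 are bounded by 1
  have hent : ∀ u v : ((Fin s ⊕ Fin t) × Fin m), |𝒜 u v| ≤ 1 := by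
    rintro ⟨a, i⟩ ⟨b, j⟩
    have h1 : 𝒜 (a, i) (b, j) = A₁ a b * (1 : Matrix (Fin m) (Fin m) ℝ) i j + D a b * A₂ i j := by
      rw [h𝒜]; rfl
    by_cases hij : i = j
    · subst hij
      rw [h1, Matrix.one_apply_eq, mul_one, hA₂diag, mul_zero, add_zero]
      rcases hA₁ent a b with h | h | h <;> rw [h] <;> norm_num
    · rw [h1, Matrix.one_apply_ne hij, mul_zero, zero_add, abs_mul]
      have h2 : |D a b| ≤ 1 := by rcases hDent a b with h | h | h <;> rw [h] <;> norm_num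
      have h3 : |A₂ i j| ≤ 1 := by rcases hA₂ent i j with h | h | h <;> rw [h] <;> norm_num
      calc |D a b| * |A₂ i j| ≤ 1 * 1 := mul_le_mul h2 h3 (abs_nonneg _) zero_le_one
        _ = 1 := one_mul _
  -- diagonal of 𝒜 is zero
  have hdiag : ∀ u : ((Fin s ⊕ Fin t) × Fin m), 𝒜 u u = 0 := by
    rintro ⟨a, i⟩
    have h1 : 𝒜 (a, i) (a, i) = A₁ a a * (1 : Matrix (Fin m) (Fin m) ℝ) i i + D a a * A₂ i i := by
      rw [h𝒜]; rfl
    have h2 : A₁ a a = 0 := by rcases a with a | a <;> simp [hA₁, Matrix.fromBlocks]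
    rw [h1, h2, hA₂diag]; ring
  -- trace of 𝒜 is zero
  have htr : Matrix.trace 𝒜 = 0 := by
    simp [Matrix.trace, Matrix.diag, hdiag]
  -- A₁ anticommutes with D
  have hAD : A₁ * D + D * A₁ = 0 := by
    subst hA₁ hD
    rw [Matrix.fromBlocks_multiply, Matrix.fromBlocks_multiply, Matrix.fromBlocks_add]
    simp [Matrix.mul_neg]
  have hD2 : D * D = 1 := by
    subst hD
    rw [Matrix.fromBlocks_multiply]
    simp [Matrix.fromBlocks_one]
  -- 𝒜 squares to (θ₁² + θ₂²) I
  have h𝒜sq : 𝒜 * 𝒜 = (θ₁ ^ 2 + θ₂ ^ 2) • (1 : Matrix ((Fin s ⊕ Fin t) × Fin m) ((Fin s ⊕ Fin t) × Fin m) ℝ) := by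
    rw [h𝒜, add_mul, mul_add, mul_add, ← Matrix.mul_kronecker_mul, ← Matrix.mul_kronecker_mul,
      ← Matrix.mul_kronecker_mul, ← Matrix.mul_kronecker_mul]
    have hcross : (A₁ * D) ⊗ₖ ((1 : Matrix (Fin m) (Fin m) ℝ) * A₂)
        + (D * A₁) ⊗ₖ (A₂ * (1 : Matrix (Fin m) (Fin m) ℝ))
        = (0 : Matrix ((Fin s ⊕ Fin t) × Fin m) ((Fin s ⊕ Fin t) × Fin m) ℝ) := by
      rw [Matrix.one_mul, Matrix.mul_one, ← Matrix.add_kronecker, hAD, Matrix.zero_kronecker]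
    rw [hA₁sq, hD2, hA₂sq, Matrix.mul_one]
    rw [add_assoc, ← add_assoc ((A₁ * D) ⊗ₖ _), hcross, zero_add]
    rw [Matrix.smul_kronecker, Matrix.kronecker_smul, Matrix.one_kronecker_one, add_smul]
  -- pass to linear maps
  set f : (((Fin s ⊕ Fin t) × Fin m) → ℝ) →ₗ[ℝ] (((Fin s ⊕ Fin t) × Fin m) → ℝ) := Matrix.toLin' 𝒜 with hfdef
  have hf2 : f ∘ₗ f = (θ₁ ^ 2 + θ₂ ^ 2) • LinearMap.id := by
    rw [hfdef, ← Matrix.toLin'_mul, h𝒜sq, _root_.map_smul, Matrix.toLin'_one]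
  set p : Submodule ℝ (((Fin s ⊕ Fin t) × Fin m) → ℝ) := LinearMap.ker (f - θ • LinearMap.id) with hpdef
  set g : (((Fin s ⊕ Fin t) × Fin m) → ℝ) →ₗ[ℝ] (((Fin s ⊕ Fin t) × Fin m) → ℝ) := (2 * θ)⁻¹ • (f + θ • LinearMap.id) with hgdef
  have h2θ : (2 * θ) ≠ 0 := by positivity
  have hproj : LinearMap.IsProj p g := by
    constructor
    · intro x
      rw [hpdef, LinearMap.mem_ker]
      have hffx : f (f x) = (θ₁ ^ 2 + θ₂ ^ 2) • x := by
        have := DFunLike.congr_fun hf2 x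
        simpa using this
      simp only [hgdef, LinearMap.sub_apply, LinearMap.smul_apply, LinearMap.add_apply,
        LinearMap.id_apply, _root_.map_smul, _root_.map_add, hffx]
      rw [← hθsq]
      match_scalars <;> field_simp <;> ring
    · intro x hx
      rw [hpdef, LinearMap.mem_ker, LinearMap.sub_apply, LinearMap.smul_apply,
        LinearMap.id_apply, sub_eq_zero] at hx
      simp only [hgdef, LinearMap.smul_apply, LinearMap.add_apply, LinearMap.id_apply, hx]
      match_scalars <;> field_simp <;> ring
  -- trace computations
  have htrf : LinearMap.trace ℝ (((Fin s ⊕ Fin t) × Fin m) → ℝ) f = 0 := by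
    rw [hfdef, LinearMap.trace_eq_matrix_trace ℝ (Pi.basisFun ℝ ((Fin s ⊕ Fin t) × Fin m)),
      LinearMap.toMatrix_eq_toMatrix', LinearMap.toMatrix'_toLin']
    exact htr
  have hcard : Fintype.card ((Fin s ⊕ Fin t) × Fin m) = (s + t) * m := by
    simp [Fintype.card_prod, Fintype.card_sum]
  have hfrV : Module.finrank ℝ (((Fin s ⊕ Fin t) × Fin m) → ℝ) = (s + t) * m := by
    rw [Module.finrank_fintype_fun_eq_card, hcard]
  have htrg : LinearMap.trace ℝ (((Fin s ⊕ Fin t) × Fin m) → ℝ) g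
      = (2 * θ)⁻¹ * (θ * ((s + t) * m : ℕ)) := by
    rw [hgdef, _root_.map_smul, _root_.map_add, htrf, _root_.map_smul, LinearMap.trace_id,
      hfrV]
    simp [smul_eq_mul]
  have hrankp : 2 * Module.finrank ℝ p = (s + t) * m := by
    have h1 : ((Module.finrank ℝ p : ℕ) : ℝ) = (2 * θ)⁻¹ * (θ * ((s + t) * m : ℕ)) := by
      rw [← hproj.trace, htrg]
    have h2 : ((2 * Module.finrank ℝ p : ℕ) : ℝ) = (((s + t) * m : ℕ) : ℝ) := by
      push_cast
      push_cast at h1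
      rw [h1]
      field_simp
    exact_mod_cast h2
  -- the coordinate subspace of S
  set c : Finset ((Fin s ⊕ Fin t) × Fin m) := Sᶜ with hcdef
  set L : (((Fin s ⊕ Fin t) × Fin m) → ℝ) →ₗ[ℝ] ({x // x ∈ c} → ℝ) :=
    LinearMap.funLeft ℝ ℝ (fun x : {x // x ∈ c} => (x : ((Fin s ⊕ Fin t) × Fin m))) with hLdef
  set W : Submodule ℝ (((Fin s ⊕ Fin t) × Fin m) → ℝ) := LinearMap.ker L with hWdef
  have hLsurj : Function.Surjective L :=
    LinearMap.funLeft_surjective_of_injective ℝ ℝ _ Subtype.val_injective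
  have hWrank : Module.finrank ℝ W = S.card := by
    have hccard : c.card = (s + t) * m - S.card := by
      rw [hcdef, Finset.card_compl, hcard]
    have h1 := LinearMap.finrank_range_add_finrank_ker L
    rw [LinearMap.range_eq_top.mpr hLsurj, finrank_top, hfrV,
      Module.finrank_fintype_fun_eq_card, Fintype.card_coe, hccard] at h1
    have h2 : S.card ≤ (s + t) * m := hcard ▸ Finset.card_le_univ S
    rw [← hWdef] at h1
    generalize hn : (s + t) * m = n at h1 h2
    omega
  -- the intersection is nontrivial
  have hinf : 0 < Module.finrank ℝ ↥(p ⊓ W) := by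
    have h1 := Submodule.finrank_sup_add_finrank_inf_eq p W
    have h2 : Module.finrank ℝ ↥(p ⊔ W) ≤ (s + t) * m := hfrV ▸ Submodule.finrank_le _
    have h4 : 2 * S.card = (s + t) * m + 2 := by rw [← Nat.mul_comm m (s + t)]; exact hS
    generalize hn : (s + t) * m = n at h2 h4 hrankp
    omega
  have hne : p ⊓ W ≠ ⊥ := by
    intro h
    rw [h, finrank_bot] at hinf
    exact lt_irrefl 0 hinf
  obtain ⟨v, hvmem, hvne⟩ := Submodule.ne_bot_iff _ |>.mp hne
  obtain ⟨hvp, hvW⟩ := Submodule.mem_inf.mp hvmem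
  -- v is an eigenvector supported on S
  have heig : 𝒜.mulVec v = θ • v := by
    rw [hpdef, LinearMap.mem_ker, LinearMap.sub_apply, LinearMap.smul_apply,
      LinearMap.id_apply, sub_eq_zero] at hvp
    rw [← Matrix.toLin'_apply 𝒜 v, ← hfdef, hvp]
  have hsupp : ∀ i, i ∉ S → v i = 0 := by
    intro i hi
    have hic : i ∈ c := by rw [hcdef, Finset.mem_compl]; exact hi
    have := congrFun (LinearMap.mem_ker.mp hvW) ⟨i, hic⟩
    simpa [hLdef, LinearMap.funLeft_apply] using this
  exact huang_degree_argument θ hθ 𝒜 hent S v hvne hsupp heig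
end

section
/- Let θ₁, θ₂ > 0 be real numbers. Let A₁ be an n×n signed bipartite adjacency matrix with parts of sizes s and n−s satisfying A₁² = θ₁²·I_n, and let A₂ be an m×m signed adjacency matrix satisfying A₂² = θ₂²·I_m. Let 𝒜' = (A₁ + D)⊗A₂ be the signed semi-strong product matrix. Then for every subset S of the mn row indices of 𝒜' with |S| = mn/2 + 1 (note mn is necessarily even), there exists u ∈ S such that #{v ∈ S : 𝒜'_{uv} ≠ 0} ≥ √((θ₁² + 1)·θ₂²). -/
/-!
Since `A₁` anticommutes with `D` and `D² = 1`, we get `(A₁ + D)² = (θ₁² + 1) I`, hence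
`𝒜'² = θ² I` with `θ = √((θ₁² + 1) θ₂²)`; moreover `tr 𝒜' = tr (A₁ + D) · tr A₂ = 0`. So
`(θ I - 𝒜')/(2θ)` is an idempotent of trace `mn/2`, and the `θ`-eigenspace of `𝒜'` has
dimension `mn/2`. It therefore meets the `(mn/2 + 1)`-dimensional space of vectors supported
on `S` in some `x ≠ 0`. Evaluating `𝒜' x = θ x` at a coordinate `u` where `|x u|` is maximal
gives `θ |x u| ≤ deg_S(u) |x u|`, as all entries of `𝒜'` lie in `[-1, 1]` (Huang's argument).
-/

open Matrix Kronecker Module Finset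

namespace Matrix

section

variable {K ι : Type*} [Field K] [Fintype ι]

theorem IsIdempotentElem.rank_eq_trace [CharZero K] [DecidableEq ι] {Q : Matrix ι ι K}
    (hQ : IsIdempotentElem Q) : (Q.rank : K) = Q.trace := by
  have hproj : IsIdempotentElem (toLin' Q) := hQ.map toLinAlgEquiv'
  rw [← trace_toLin'_eq, (LinearMap.IsIdempotentElem.isProj_range _ hproj).trace]
  rfl

theorem exists_mulVec_eq_zero_of_rank_lt {Q : Matrix ι ι K} {S : Finset ι} (h : Q.rank < #S) :
    ∃ x ≠ 0, Q *ᵥ x = 0 ∧ ∀ i ∉ S, x i = 0 := by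
  let E := Function.ExtendByZero.linearMap K ((↑) : S → ι)
  have hker : LinearMap.ker (Q.mulVecLin.rangeRestrict ∘ₗ E) ≠ ⊥ :=
    LinearMap.ker_ne_bot_of_finrank_lt <| by rwa [finrank_fintype_fun_eq_card, Fintype.card_coe]
  obtain ⟨y, hy, hy0⟩ := Submodule.exists_mem_ne_zero_of_ne_bot hker
  refine ⟨E y, fun h => hy0 (funext fun i => ?_), ?_, fun i hi => ?_⟩
  · rw [← Subtype.val_injective.extend_apply y 0 i]
    exact congrFun h i
  · simpa [LinearMap.rangeRestrict] using hy
  · exact Function.extend_apply' _ _ _ (by simpa using hi)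

theorem exists_mulVec_eq_smul_of_mul_self_eq_smul_one [CharZero K] [DecidableEq ι]
    {A : Matrix ι ι K} {θ : K} (hθ : θ ≠ 0) (hA : A * A = θ ^ 2 • 1) (htr : A.trace = 0)
    {S : Finset ι} (hS : Fintype.card ι < 2 * #S) :
    ∃ x ≠ 0, A *ᵥ x = θ • x ∧ ∀ i ∉ S, x i = 0 := by
  have h2θ : 2 * θ ≠ 0 := mul_ne_zero two_ne_zero hθ
  let Q := (2 * θ)⁻¹ • (θ • 1 - A)
  -- `Q` is the spectral projection onto the `-θ`-eigenspace, so its kernel is the `θ`-eigenspace.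
  have hQ : IsIdempotentElem Q := by
    have hsq : (θ • 1 - A) * (θ • 1 - A) = (2 * θ) • (θ • 1 - A) := by
      simp only [sub_mul, mul_sub, Matrix.smul_mul, Matrix.mul_smul, one_mul, mul_one, hA]
      module
    rw [IsIdempotentElem, Matrix.smul_mul, Matrix.mul_smul, hsq, smul_smul, smul_smul,
      inv_mul_cancel_right₀ h2θ]
  have hrank : 2 * Q.rank = Fintype.card ι := by
    have h := hQ.rank_eq_trace
    rw [trace_smul, trace_sub, trace_smul, trace_one, htr, smul_eq_mul, smul_eq_mul, sub_zero] at h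
    have : ((2 * Q.rank : ℕ) : K) = Fintype.card ι := by
      push_cast; rw [h]; field_simp
    exact_mod_cast this
  obtain ⟨x, hx0, hQx, hxS⟩ := exists_mulVec_eq_zero_of_rank_lt (Q := Q) (S := S) (by omega)
  refine ⟨x, hx0, ?_, hxS⟩
  rw [smul_mulVec, smul_eq_zero_iff_right (inv_ne_zero h2θ), sub_mulVec, smul_mulVec, one_mulVec,
    sub_eq_zero] at hQx
  exact hQx.symm

end

theorem exists_mem_abs_le_card_filter_ne_zero {R ι : Type*} [CommRing R] [LinearOrder R]
    [IsStrictOrderedRing R] [Fintype ι] {A : Matrix ι ι R} (hA : ∀ u v, |A u v| ≤ 1)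
    {S : Finset ι} {x : ι → R} (hx0 : x ≠ 0) (hxS : ∀ i ∉ S, x i = 0) {μ : R}
    (hAx : A *ᵥ x = μ • x) :
    ∃ u ∈ S, |μ| ≤ #{v ∈ S | A u v ≠ 0} := by
  have hSne : S.Nonempty := by
    by_contra! hS
    exact hx0 (funext fun i => hxS i (by simp [hS]))
  obtain ⟨u, hu, hmaxS⟩ := S.exists_max_image (|x ·|) hSne
  have hmax (v : ι) : |x v| ≤ |x u| := by
    by_cases hv : v ∈ S
    · exact hmaxS v hv
    · simp [hxS v hv]
  have hxu : 0 < |x u| := by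
    by_contra! h
    exact hx0 (funext fun v => abs_nonpos_iff.mp ((hmax v).trans h))
  refine ⟨u, hu, le_of_mul_le_mul_right ?_ hxu⟩
  set F := {v ∈ S | A u v ≠ 0}
  have hsum : (A *ᵥ x) u = ∑ v ∈ F, A u v * x v := by
    refine (sum_subset (subset_univ F) fun v _ hv => ?_).symm
    by_cases hvS : v ∈ S
    · simp only [F, mem_filter, hvS, true_and, not_not] at hv
      simp [hv]
    · simp [hxS v hvS]
  calc |μ| * |x u| = |(A *ᵥ x) u| := by rw [hAx, Pi.smul_apply, smul_eq_mul, abs_mul]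
    _ ≤ ∑ v ∈ F, |A u v * x v| := hsum ▸ abs_sum_le_sum_abs _ _
    _ ≤ ∑ v ∈ F, |x u| := by
      refine sum_le_sum fun v _ => ?_
      rw [abs_mul]
      exact (mul_le_mul (hA u v) (hmax v) (abs_nonneg _) zero_le_one).trans_eq (one_mul _)
    _ = #F * |x u| := by rw [sum_const, nsmul_eq_mul]

theorem fromBlocks_add_mul_self {R m n : Type*} [Ring R] [Fintype m] [Fintype n] [DecidableEq m]
    [DecidableEq n] (P : Matrix m n R) (Q : Matrix n m R) :
    (fromBlocks 0 P Q 0 + fromBlocks 1 0 0 (-1)) * (fromBlocks 0 P Q 0 + fromBlocks 1 0 0 (-1)) =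
      fromBlocks 0 P Q 0 * fromBlocks 0 P Q 0 + 1 := by
  simp [fromBlocks_add, fromBlocks_multiply, ← fromBlocks_one, add_comm]

theorem abs_fromBlocks_one_neg_one_apply_le_one {R m n : Type*} [Ring R] [LinearOrder R]
    [IsOrderedRing R] [DecidableEq m] [DecidableEq n] {P : Matrix m n R} (hP : ∀ i j, |P i j| ≤ 1) :
    ∀ i j, |fromBlocks 1 P Pᵀ (-1) i j| ≤ 1 := by
  rintro (i | i) (j | j)
  · rcases eq_or_ne i j with rfl | h <;> simp [*]
  · exact hP i j
  · exact hP j i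
  · rcases eq_or_ne i j with rfl | h <;> simp [*]

end Matrix

theorem signed_semi_strong_product_induced_subgraph_max_degree_general
    (s t m : ℕ) (θ₁ θ₂ : ℝ) (hθ₂ : 0 < θ₂)
    (P : Matrix (Fin s) (Fin t) ℝ)
    (hP : ∀ i j, P i j = -1 ∨ P i j = 0 ∨ P i j = 1)
    (A₂ : Matrix (Fin m) (Fin m) ℝ)
    (hA₂diag : ∀ i, A₂ i i = 0)
    (hA₂ent : ∀ i j, A₂ i j = -1 ∨ A₂ i j = 0 ∨ A₂ i j = 1)
    (A₁ : Matrix (Fin s ⊕ Fin t) (Fin s ⊕ Fin t) ℝ)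
    (hA₁ : A₁ = Matrix.fromBlocks 0 P Pᵀ 0)
    (hA₁sq : A₁ * A₁ = (θ₁ ^ 2) • (1 : Matrix (Fin s ⊕ Fin t) (Fin s ⊕ Fin t) ℝ))
    (hA₂sq : A₂ * A₂ = (θ₂ ^ 2) • (1 : Matrix (Fin m) (Fin m) ℝ))
    (D : Matrix (Fin s ⊕ Fin t) (Fin s ⊕ Fin t) ℝ)
    (hD : D = Matrix.fromBlocks 1 0 0 (-1))
    (𝒜 : Matrix ((Fin s ⊕ Fin t) × Fin m) ((Fin s ⊕ Fin t) × Fin m) ℝ)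
    (h𝒜 : 𝒜 = (A₁ + D) ⊗ₖ A₂)
    (S : Finset ((Fin s ⊕ Fin t) × Fin m))
    (hS : 2 * S.card = m * (s + t) + 2) :
    ∃ u ∈ S, Real.sqrt ((θ₁ ^ 2 + 1) * θ₂ ^ 2) ≤
      ((S.filter (fun v => 𝒜 u v ≠ 0)).card : ℝ) := by
  set θ := Real.sqrt ((θ₁ ^ 2 + 1) * θ₂ ^ 2)
  have hθ : 0 < θ := Real.sqrt_pos.mpr (by positivity)
  have hsign {a : ℝ} (h : a = -1 ∨ a = 0 ∨ a = 1) : |a| ≤ 1 := by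
    rcases h with rfl | rfl | rfl <;> simp
  have hBsq : (A₁ + D) * (A₁ + D) = (θ₁ ^ 2 + 1) • 1 := by
    rw [hA₁, hD, fromBlocks_add_mul_self, ← hA₁, hA₁sq, add_smul, one_smul]
  have h𝒜sq : 𝒜 * 𝒜 = θ ^ 2 • 1 := by
    rw [h𝒜, ← mul_kronecker_mul, hBsq, hA₂sq, smul_kronecker, kronecker_smul, one_kronecker_one,
      smul_smul, Real.sq_sqrt (by positivity)]
  have h𝒜tr : 𝒜.trace = 0 := by
    have hA₂tr : A₂.trace = 0 := by simp [trace, hA₂diag]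
    rw [h𝒜, trace_kronecker, hA₂tr, mul_zero]
  have h𝒜ent (u v) : |𝒜 u v| ≤ 1 := by
    have hB : A₁ + D = fromBlocks 1 P Pᵀ (-1) := by simp [hA₁, hD, fromBlocks_add]
    rw [h𝒜, kronecker_apply, abs_mul, hB]
    exact mul_le_one₀ (abs_fromBlocks_one_neg_one_apply_le_one (fun i j => hsign (hP i j)) _ _)
      (abs_nonneg _) (hsign (hA₂ent _ _))
  obtain ⟨x, hx0, h𝒜x, hxS⟩ :=
    exists_mulVec_eq_smul_of_mul_self_eq_smul_one hθ.ne' h𝒜sq h𝒜tr (S := S)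
      (by simp only [Fintype.card_prod, Fintype.card_sum, Fintype.card_fin]; lia)
  obtain ⟨u, hu, hdeg⟩ := exists_mem_abs_le_card_filter_ne_zero h𝒜ent hx0 hxS h𝒜x
  exact ⟨u, hu, by rwa [abs_of_pos hθ] at hdeg⟩

/-- If `A₁` is an `n × n` signed bipartite adjacency matrix (parts of sizes `s` and `t = n - s`)
with `A₁² = θ₁² I`, and `A₂` is an `m × m` signed adjacency matrix with `A₂² = θ₂² I`, then
every `(mn/2 + 1)`-vertex induced subgraph of the signed semi-strong product
`𝒜' = (A₁ + D) ⊗ A₂` has maximum degree at least `√((θ₁² + 1)·θ₂²)`. -/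
theorem signed_semi_strong_product_induced_subgraph_max_degree
    (s t m : ℕ) (θ₁ θ₂ : ℝ) (hθ₁ : 0 < θ₁) (hθ₂ : 0 < θ₂)
    (P : Matrix (Fin s) (Fin t) ℝ)
    (hP : ∀ i j, P i j = -1 ∨ P i j = 0 ∨ P i j = 1)
    (A₂ : Matrix (Fin m) (Fin m) ℝ)
    (hA₂symm : A₂.IsSymm) (hA₂diag : ∀ i, A₂ i i = 0)
    (hA₂ent : ∀ i j, A₂ i j = -1 ∨ A₂ i j = 0 ∨ A₂ i j = 1)
    (A₁ : Matrix (Fin s ⊕ Fin t) (Fin s ⊕ Fin t) ℝ)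
    (hA₁ : A₁ = Matrix.fromBlocks 0 P Pᵀ 0)
    (hA₁sq : A₁ * A₁ = (θ₁ ^ 2) • (1 : Matrix (Fin s ⊕ Fin t) (Fin s ⊕ Fin t) ℝ))
    (hA₂sq : A₂ * A₂ = (θ₂ ^ 2) • (1 : Matrix (Fin m) (Fin m) ℝ))
    (D : Matrix (Fin s ⊕ Fin t) (Fin s ⊕ Fin t) ℝ)
    (hD : D = Matrix.fromBlocks 1 0 0 (-1))
    (𝒜 : Matrix ((Fin s ⊕ Fin t) × Fin m) ((Fin s ⊕ Fin t) × Fin m) ℝ)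
    (h𝒜 : 𝒜 = (A₁ + D) ⊗ₖ A₂)
    (S : Finset ((Fin s ⊕ Fin t) × Fin m))
    (hS : 2 * S.card = m * (s + t) + 2) :
    ∃ u ∈ S, Real.sqrt ((θ₁ ^ 2 + 1) * θ₂ ^ 2) ≤
      ((S.filter (fun v => 𝒜 u v ≠ 0)).card : ℝ) :=
  signed_semi_strong_product_induced_subgraph_max_degree_general s t m θ₁ θ₂ hθ₂ P hP A₂ hA₂diag
    hA₂ent A₁ hA₁ hA₁sq hA₂sq D hD 𝒜 h𝒜 S hS
end

section
/- Let A₁ be an n×n signed bipartite adjacency matrix with parts of sizes s and n−s, and let A₂ be an m×m signed adjacency matrix. Let λ, μ ≥ 0 be real numbers such that A₁² − λ²·I_n and A₂² − μ²·I_m are positive semidefinite (i.e. λ² and μ² are lower bounds for the eigenvalues of A₁² and A₂², as when λ² and μ² are the minimum eigenvalues of A₁² and A₂²). Assume that n = 2s, or that the characteristic polynomial of A₂ equals the characteristic polynomial of −A₂. Let 𝒜 = A₁⊗I_m + D⊗A₂ be the signed Cartesian product matrix. Then for every subset S of the mn row indices of 𝒜 with |S| = ⌊mn/2⌋ + 1,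 there exists u ∈ S such that #{v ∈ S : 𝒜_{uv} ≠ 0} ≥ √(λ² + μ²). -/
/-!
Because `A₁` anticommutes with `D` and `D² = 1`, the cross terms cancel in
`𝒜² = A₁² ⊗ 1 + 1 ⊗ A₂²`, so `𝒜² - (λ² + μ²)·1` is positive semidefinite and every eigenvalue
of `𝒜` has absolute value at least `θ = √(λ² + μ²)`. The eigenvectors of one sign span a space
of dimension at least `mn/2`, which meets the `|S|`-dimensional space of vectors supported on `S`
in some `x ≠ 0`; then `θ ‖x‖² ≤ |xᵀ𝒜x|`. On the other hand, as the entries of `𝒜` lie in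
`[-1, 1]`, AM–GM gives `|xᵀ𝒜x| ≤ ∑_{u ∈ S} deg_S(u) x_u²`, so some `u ∈ S` has `deg_S(u) ≥ θ`.
-/

open Matrix Kronecker Finset

lemma LinearIndependent.finrank_span_image_finset {K V ι : Type*} [Field K] [AddCommGroup V]
    [Module K V] {v : ι → V} (hv : LinearIndependent K v) (T : Finset ι) :
    Module.finrank K (Submodule.span K (v '' T)) = #T := by
  rw [Set.image_eq_range]
  exact (finrank_span_eq_card (hv.comp ((↑) : T → ι) Subtype.val_injective)).trans
    (Fintype.card_coe T)

lemma LinearIndependent.exists_ne_zero_mem_span_image_of_finrank_lt {K V ι ι' : Type*} [Field K]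
    [AddCommGroup V] [Module K V] [FiniteDimensional K V] {v : ι → V} {w : ι' → V}
    (hv : LinearIndependent K v) (hw : LinearIndependent K w) {T : Finset ι} {S : Finset ι'}
    (h : Module.finrank K V < #T + #S) :
    ∃ x ≠ 0, x ∈ Submodule.span K (v '' T) ∧ x ∈ Submodule.span K (w '' S) := by
  have hdisj : ¬ Disjoint (Submodule.span K (v '' T)) (Submodule.span K (w '' S)) := fun hd => by
    have := Submodule.finrank_add_finrank_le_of_disjoint hd
    rw [hv.finrank_span_image_finset, hw.finrank_span_image_finset] at this
    omega
  rw [Submodule.disjoint_def] at hdisj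
  push Not at hdisj
  obtain ⟨x, hxT, hxS, hx0⟩ := hdisj
  exact ⟨x, hx0, hxT, hxS⟩

lemma Orthonormal.inner_eq_zero_of_mem_span_image {𝕜 E κ : Type*} [RCLike 𝕜]
    [NormedAddCommGroup E] [InnerProductSpace 𝕜 E] {v : κ → E} (hv : Orthonormal 𝕜 v)
    {T : Set κ} {i : κ} (hi : i ∉ T) {x : E} (hx : x ∈ Submodule.span 𝕜 (v '' T)) :
    inner 𝕜 x (v i) = 0 := by
  obtain ⟨l, hl, rfl⟩ := (Finsupp.mem_span_image_iff_linearCombination 𝕜).mp hx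
  exact hv.inner_finsupp_eq_zero hi hl

lemma LinearMap.IsSymmetric.mul_inner_self_le_of_mem_span_eigenvectors {E κ : Type*}
    [NormedAddCommGroup E] [InnerProductSpace ℝ E] [Fintype κ] {f : E →ₗ[ℝ] E}
    (hf : f.IsSymmetric) (b : OrthonormalBasis κ ℝ E) {lams : κ → ℝ}
    (hb : ∀ i, f (b i) = lams i • b i) {T : Set κ} {θ : ℝ} (hT : ∀ i ∈ T, θ ≤ lams i) {x : E}
    (hx : x ∈ Submodule.span ℝ (b '' T)) :
    θ * inner ℝ x x ≤ inner ℝ x (f x) := by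
  rw [← b.sum_inner_mul_inner x x, ← b.sum_inner_mul_inner x (f x), Finset.mul_sum]
  refine Finset.sum_le_sum fun i _ => ?_
  rw [← hf, hb, real_inner_smul_left, real_inner_comm x (b i)]
  by_cases hi : i ∈ T
  · nlinarith [hT i hi, mul_self_nonneg (inner ℝ x (b i))]
  · simp [b.orthonormal.inner_eq_zero_of_mem_span_image hi hx]

section DegreeBound

variable {ι : Type*} [Fintype ι]

lemma Matrix.IsSymm.abs_dotProduct_mulVec_le_sum_degree {M : Matrix ι ι ℝ} (hM : M.IsSymm)
    (hent : ∀ u v, |M u v| ≤ 1) {S : Finset ι} {x : ι → ℝ} (hx : ∀ v ∉ S, x v = 0) :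
    |x ⬝ᵥ M *ᵥ x| ≤ ∑ u ∈ S, #{v ∈ S | M u v ≠ 0} * x u ^ 2 := by
  have hrestrict : ∀ g : ι → ℝ, (∀ u ∉ S, g u = 0) → ∑ u, g u = ∑ u ∈ S, g u := fun g hg =>
    (sum_subset (subset_univ S) fun u _ hu => hg u hu).symm
  -- AM–GM charges half of `|x u * M u v * x v|` to the row of `u` and half to the row of `v`.
  set a : ι → ι → ℝ := fun u v => if M u v ≠ 0 then x u ^ 2 else 0
  have hterm : ∀ u v, |x u * (M u v * x v)| ≤ (a u v + a v u) / 2 := by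
    intro u v
    have hvu : M v u = M u v := hM.apply u v
    by_cases h : M u v = 0
    · simp [a, h, hvu]
    · simp only [a, hvu, ne_eq, h, not_false_eq_true, if_true, abs_mul]
      nlinarith [hent u v, abs_nonneg (x u), abs_nonneg (x v), sq_abs (x u), sq_abs (x v),
        sq_nonneg (|x u| - |x v|), abs_nonneg (M u v)]
  calc |x ⬝ᵥ M *ᵥ x| = |∑ u ∈ S, ∑ v ∈ S, x u * (M u v * x v)| := by
        rw [dotProduct, hrestrict _ fun u hu => by simp [hx u hu]]
        simp only [mulVec, dotProduct, mul_sum]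
        rw [sum_congr rfl fun u _ => hrestrict _ fun v hv => by simp [hx v hv]]
    _ ≤ ∑ u ∈ S, ∑ v ∈ S, |x u * (M u v * x v)| :=
        (abs_sum_le_sum_abs _ _).trans (sum_le_sum fun u _ => abs_sum_le_sum_abs _ _)
    _ ≤ ∑ u ∈ S, ∑ v ∈ S, (a u v + a v u) / 2 := by gcongr with u _ v _; exact hterm u v
    _ = ∑ u ∈ S, ∑ v ∈ S, a u v := by
        simp only [← sum_div, sum_add_distrib]
        rw [sum_comm (f := fun u v => a v u)]
        ring
    _ = ∑ u ∈ S, #{v ∈ S | M u v ≠ 0} * x u ^ 2 := by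
        simp only [a, ← sum_filter, sum_const, nsmul_eq_mul]

lemma Matrix.IsSymm.exists_degree_ge_of_mul_dotProduct_self_le {M : Matrix ι ι ℝ}
    (hM : M.IsSymm) (hent : ∀ u v, |M u v| ≤ 1) {S : Finset ι} {x : ι → ℝ}
    (hx : ∀ v ∉ S, x v = 0) (hx0 : x ≠ 0) {θ : ℝ} (hθ : θ * (x ⬝ᵥ x) ≤ |x ⬝ᵥ M *ᵥ x|) :
    ∃ u ∈ S, θ ≤ #{v ∈ S | M u v ≠ 0} := by
  by_contra! hdeg
  obtain ⟨w, hw⟩ := Function.ne_iff.mp hx0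
  have hwS : w ∈ S := by by_contra h; exact hw (hx w h)
  have hxx : x ⬝ᵥ x = ∑ u ∈ S, x u ^ 2 := by
    rw [dotProduct, ← sum_subset (subset_univ S) fun u _ hu => by simp [hx u hu]]
    simp only [sq]
  have hlt : ∑ u ∈ S, #{v ∈ S | M u v ≠ 0} * x u ^ 2 < θ * (x ⬝ᵥ x) := by
    rw [hxx, mul_sum]
    exact sum_lt_sum (fun u hu => by gcongr; exact (hdeg u hu).le)
      ⟨w, hwS, mul_lt_mul_of_pos_right (hdeg w hwS) (sq_pos_of_ne_zero hw)⟩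
  linarith [hM.abs_dotProduct_mulVec_le_sum_degree hent hx]

variable [DecidableEq ι]

lemma Matrix.IsHermitian.le_abs_eigenvalues_of_posSemidef {M : Matrix ι ι ℝ} (hM : M.IsHermitian)
    {θ : ℝ} (hpsd : (M * M - θ ^ 2 • 1).PosSemidef) (i : ι) : θ ≤ |hM.eigenvalues i| := by
  set v := (hM.eigenvectorBasis i).ofLp
  have hv : (M * M - θ ^ 2 • 1) *ᵥ v = (hM.eigenvalues i ^ 2 - θ ^ 2) • v := by
    rw [sub_mulVec, ← mulVec_mulVec, hM.mulVec_eigenvectorBasis, mulVec_smul,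
      hM.mulVec_eigenvectorBasis, smul_mulVec, one_mulVec, smul_smul, sub_smul, sq, sq]
  have hvv : v ⬝ᵥ v = 1 := by
    have h := inner_self_eq_one_of_norm_eq_one (𝕜 := ℝ) (hM.eigenvectorBasis.orthonormal.1 i)
    rwa [EuclideanSpace.inner_eq_star_dotProduct, star_trivial] at h
  have h := hpsd.dotProduct_mulVec_nonneg v
  rw [hv, dotProduct_smul, star_trivial, hvv, smul_eq_mul, mul_one, sub_nonneg] at h
  exact (le_abs_self θ).trans (sq_le_sq.mp h)

theorem Matrix.IsHermitian.exists_degree_ge_of_posSemidef_mul_self_sub {M : Matrix ι ι ℝ}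
    (hM : M.IsHermitian) (hent : ∀ u v, |M u v| ≤ 1) {θ : ℝ}
    (hpsd : (M * M - θ ^ 2 • 1).PosSemidef) {S : Finset ι} (hS : Fintype.card ι < 2 * #S) :
    ∃ u ∈ S, θ ≤ #{v ∈ S | M u v ≠ 0} := by
  set b := hM.eigenvectorBasis
  set e := EuclideanSpace.basisFun ι ℝ
  set f := toEuclideanLin M
  have hf : f.IsSymmetric := isSymmetric_toEuclideanLin_iff.mpr hM
  have hb : ∀ i, f (b i) = hM.eigenvalues i • b i := fun i => by
    simp [f, b, toLpLin_apply, hM.mulVec_eigenvectorBasis]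
  set Tpos : Finset ι := {i | θ ≤ hM.eigenvalues i}
  set Tneg : Finset ι := {i | θ ≤ -hM.eigenvalues i}
  have hcover : Fintype.card ι ≤ #Tpos + #Tneg := by
    rw [← card_univ]
    refine (card_le_card fun i _ => ?_).trans (card_union_le _ _)
    simpa [Tpos, Tneg, mem_union, ← le_abs] using hM.le_abs_eigenvalues_of_posSemidef hpsd i
  have hdim : ∀ T : Finset ι, Fintype.card ι < #T + #S →
      ∃ x ≠ 0, x ∈ Submodule.span ℝ (b '' T) ∧ x ∈ Submodule.span ℝ (e '' S) := fun T hT =>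
    b.orthonormal.linearIndependent.exists_ne_zero_mem_span_image_of_finrank_lt
      e.orthonormal.linearIndependent (by rwa [finrank_euclideanSpace])
  obtain ⟨x, hx0, hxS, hxθ⟩ : ∃ x ≠ 0, x ∈ Submodule.span ℝ (e '' S) ∧
      θ * inner ℝ x x ≤ |inner ℝ x (f x)| := by
    by_cases hpos : Fintype.card ι < #Tpos + #S
    · obtain ⟨x, hx0, hxT, hxS⟩ := hdim Tpos hpos
      refine ⟨x, hx0, hxS, le_trans ?_ (le_abs_self _)⟩
      exact hf.mul_inner_self_le_of_mem_span_eigenvectors b hb (by simp [Tpos]) hxT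
    · obtain ⟨x, hx0, hxT, hxS⟩ := hdim Tneg (by omega)
      have hf' : (-f).IsSymmetric := fun x y => by simp [hf x y]
      refine ⟨x, hx0, hxS, le_trans ?_ (neg_le_abs _)⟩
      simpa using hf'.mul_inner_self_le_of_mem_span_eigenvectors b (lams := -hM.eigenvalues)
        (fun i => by simp [hb]) (by simp [Tneg]) hxT
  have hsupp : ∀ v ∉ S, x v = 0 := fun v hv => by
    rw [← EuclideanSpace.inner_basisFun_real]
    exact e.orthonormal.inner_eq_zero_of_mem_span_image hv hxS
  refine (isHermitian_iff_isSymm.mp hM).exists_degree_ge_of_mul_dotProduct_self_le hent hsupp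
    (by simpa using hx0) ?_
  rw [EuclideanSpace.inner_eq_star_dotProduct, EuclideanSpace.inner_eq_star_dotProduct] at hxθ
  simpa [f, toLpLin_apply, dotProduct_comm] using hxθ

end DegreeBound

lemma Matrix.IsSymm.kronecker {n m R : Type*} [CommMonoid R] {A : Matrix n n R} {B : Matrix m m R}
    (hA : A.IsSymm) (hB : B.IsSymm) : (A ⊗ₖ B).IsSymm := by
  rw [IsSymm, ← kroneckerMap_transpose, hA.eq, hB.eq]

section SignedCartesianProduct

variable {n m : Type*} [DecidableEq n] [DecidableEq m]

lemma kronecker_add_kronecker_mul_self_of_anticomm [Fintype n] [Fintype m] {R : Type*}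
    [CommRing R] {A₁ D : Matrix n n R} (A₂ : Matrix m m R) (hanti : A₁ * D + D * A₁ = 0)
    (hD : D * D = 1) :
    (A₁ ⊗ₖ 1 + D ⊗ₖ A₂) * (A₁ ⊗ₖ 1 + D ⊗ₖ A₂) = (A₁ * A₁) ⊗ₖ 1 + 1 ⊗ₖ (A₂ * A₂) := by
  have hcross : (A₁ * D) ⊗ₖ A₂ + (D * A₁) ⊗ₖ A₂ = 0 := by
    rw [← add_kronecker, hanti, zero_kronecker]
  simp only [add_mul, mul_add, ← mul_kronecker_mul, hD, one_mul, mul_one]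
  rw [← sub_eq_zero]
  convert hcross using 1
  abel

lemma posSemidef_kronecker_add_kronecker_mul_self_sub [Fintype n] [Fintype m]
    {A₁ D : Matrix n n ℝ} {A₂ : Matrix m m ℝ} (hanti : A₁ * D + D * A₁ = 0) (hD : D * D = 1)
    {a b : ℝ}
    (h₁ : (A₁ * A₁ - a • 1).PosSemidef) (h₂ : (A₂ * A₂ - b • 1).PosSemidef) :
    ((A₁ ⊗ₖ 1 + D ⊗ₖ A₂) * (A₁ ⊗ₖ 1 + D ⊗ₖ A₂) - (a + b) • 1).PosSemidef := by
  have hsplit : (A₁ ⊗ₖ 1 + D ⊗ₖ A₂) * (A₁ ⊗ₖ 1 + D ⊗ₖ A₂) - (a + b) • 1 =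
      (A₁ * A₁ - a • 1) ⊗ₖ (1 : Matrix m m ℝ) + (1 : Matrix n n ℝ) ⊗ₖ (A₂ * A₂ - b • 1) := by
    rw [kronecker_add_kronecker_mul_self_of_anticomm A₂ hanti hD, sub_eq_add_neg (A₁ * A₁),
      sub_eq_add_neg (A₂ * A₂), add_kronecker, kronecker_add, ← neg_smul, ← neg_smul,
      smul_kronecker, kronecker_smul, one_kronecker_one]
    simp only [neg_smul, add_smul]
    abel
  rw [hsplit]
  exact (h₁.kronecker .one).add (PosSemidef.one.kronecker h₂)

lemma abs_kronecker_add_diagonal_kronecker_apply_le_one {A₁ : Matrix n n ℝ} {d : n → ℝ}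
    {A₂ : Matrix m m ℝ} (h₁diag : ∀ i, A₁ i i = 0) (h₁ : ∀ i j, |A₁ i j| ≤ 1)
    (hd : ∀ i, |d i| ≤ 1) (h₂ : ∀ k l, |A₂ k l| ≤ 1) (x y : n × m) :
    |(A₁ ⊗ₖ (1 : Matrix m m ℝ) + diagonal d ⊗ₖ A₂) x y| ≤ 1 := by
  obtain ⟨i, k⟩ := x
  obtain ⟨j, l⟩ := y
  simp only [Matrix.add_apply, kronecker_apply, diagonal_apply, one_apply]
  by_cases hij : i = j
  · subst hij
    simpa [h₁diag, abs_mul] using mul_le_one₀ (hd i) (abs_nonneg _) (h₂ k l)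
  · split_ifs <;> simp [h₁]

end SignedCartesianProduct

theorem signed_cartesian_product_induced_subgraph_max_degree_general_general
    (s t m : ℕ) (lam mu : ℝ)
    (P : Matrix (Fin s) (Fin t) ℝ)
    (hP : ∀ i j, P i j = -1 ∨ P i j = 0 ∨ P i j = 1)
    (A₂ : Matrix (Fin m) (Fin m) ℝ)
    (hA₂symm : A₂.IsSymm)
    (hA₂ent : ∀ i j, A₂ i j = -1 ∨ A₂ i j = 0 ∨ A₂ i j = 1)
    (A₁ : Matrix (Fin s ⊕ Fin t) (Fin s ⊕ Fin t) ℝ)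
    (hA₁ : A₁ = Matrix.fromBlocks 0 P Pᵀ 0)
    (hpsd₁ : (A₁ * A₁ - (lam ^ 2) • (1 : Matrix (Fin s ⊕ Fin t) (Fin s ⊕ Fin t) ℝ)).PosSemidef)
    (hpsd₂ : (A₂ * A₂ - (mu ^ 2) • (1 : Matrix (Fin m) (Fin m) ℝ)).PosSemidef)
    (D : Matrix (Fin s ⊕ Fin t) (Fin s ⊕ Fin t) ℝ)
    (hD : D = Matrix.fromBlocks 1 0 0 (-1))
    (𝒜 : Matrix ((Fin s ⊕ Fin t) × Fin m) ((Fin s ⊕ Fin t) × Fin m) ℝ)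
    (h𝒜 : 𝒜 = A₁ ⊗ₖ (1 : Matrix (Fin m) (Fin m) ℝ) + D ⊗ₖ A₂)
    (S : Finset ((Fin s ⊕ Fin t) × Fin m))
    (hS : S.card = m * (s + t) / 2 + 1) :
    ∃ u ∈ S, Real.sqrt (lam ^ 2 + mu ^ 2) ≤
      ((S.filter (fun v => 𝒜 u v ≠ 0)).card : ℝ) := by
  have habs : ∀ x : ℝ, (x = -1 ∨ x = 0 ∨ x = 1) → |x| ≤ 1 := by
    rintro x (rfl | rfl | rfl) <;> norm_num
  have hD' : D = diagonal (Sum.elim 1 (-1)) := by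
    rw [hD, ← fromBlocks_diagonal]
    simp [← diagonal_one, Pi.neg_def]
  have hanti : A₁ * D + D * A₁ = 0 := by simp [hA₁, hD, fromBlocks_multiply, fromBlocks_add]
  have hDD : D * D = 1 := by simp [hD, fromBlocks_multiply]
  have hent : ∀ x y, |𝒜 x y| ≤ 1 := by
    rw [h𝒜, hD']
    refine abs_kronecker_add_diagonal_kronecker_apply_le_one (fun i => ?_) (fun i j => ?_)
      (fun i => ?_) fun k l => habs _ (hA₂ent k l)
    · rcases i with i | i <;> simp [hA₁]
    · rcases i with i | i <;> rcases j with j | j <;> simp [hA₁, habs _ (hP _ _)]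
    · rcases i with i | i <;> simp
  have hsymm : 𝒜.IsSymm := by
    have hA₁symm : A₁.IsSymm := by simp [hA₁, IsSymm, fromBlocks_transpose]
    rw [h𝒜, hD']
    exact (hA₁symm.kronecker isSymm_one).add ((isSymm_diagonal _).kronecker hA₂symm)
  have hpsd : (𝒜 * 𝒜 - √(lam ^ 2 + mu ^ 2) ^ 2 • 1).PosSemidef := by
    rw [Real.sq_sqrt (by positivity), h𝒜]
    exact posSemidef_kronecker_add_kronecker_mul_self_sub hanti hDD hpsd₁ hpsd₂
  exact (isHermitian_iff_isSymm.mpr hsymm).exists_degree_ge_of_posSemidef_mul_self_sub hent hpsd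
    (by rw [Fintype.card_prod, Fintype.card_sum, Fintype.card_fin, Fintype.card_fin,
      Fintype.card_fin, hS, mul_comm]; omega)

/-- Let `A₁` be an `n × n` signed bipartite adjacency matrix (parts of sizes `s` and `t = n - s`)
and `A₂` an `m × m` signed adjacency matrix, with `λ² ≤` eigenvalues of `A₁²` and `μ² ≤`
eigenvalues of `A₂²` (stated as positive semidefiniteness).  If the bipartition is balanced
(`n = 2s`) or the spectrum of `A₂` is symmetric, then every `(⌊mn/2⌋ + 1)`-vertex induced
subgraph of the signed Cartesian product `𝒜 = A₁ ⊗ I_m + D ⊗ A₂` has maximum degree at least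
`√(λ² + μ²)`. -/
theorem signed_cartesian_product_induced_subgraph_max_degree_general
    (s t m : ℕ) (lam mu : ℝ) (hlam : 0 ≤ lam) (hmu : 0 ≤ mu)
    (P : Matrix (Fin s) (Fin t) ℝ)
    (hP : ∀ i j, P i j = -1 ∨ P i j = 0 ∨ P i j = 1)
    (A₂ : Matrix (Fin m) (Fin m) ℝ)
    (hA₂symm : A₂.IsSymm) (hA₂diag : ∀ i, A₂ i i = 0)
    (hA₂ent : ∀ i j, A₂ i j = -1 ∨ A₂ i j = 0 ∨ A₂ i j = 1)
    (A₁ : Matrix (Fin s ⊕ Fin t) (Fin s ⊕ Fin t) ℝ)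
    (hA₁ : A₁ = Matrix.fromBlocks 0 P Pᵀ 0)
    (hpsd₁ : (A₁ * A₁ - (lam ^ 2) • (1 : Matrix (Fin s ⊕ Fin t) (Fin s ⊕ Fin t) ℝ)).PosSemidef)
    (hpsd₂ : (A₂ * A₂ - (mu ^ 2) • (1 : Matrix (Fin m) (Fin m) ℝ)).PosSemidef)
    (hbal : s + t = 2 * s ∨ A₂.charpoly = (-A₂).charpoly)
    (D : Matrix (Fin s ⊕ Fin t) (Fin s ⊕ Fin t) ℝ)
    (hD : D = Matrix.fromBlocks 1 0 0 (-1))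
    (𝒜 : Matrix ((Fin s ⊕ Fin t) × Fin m) ((Fin s ⊕ Fin t) × Fin m) ℝ)
    (h𝒜 : 𝒜 = A₁ ⊗ₖ (1 : Matrix (Fin m) (Fin m) ℝ) + D ⊗ₖ A₂)
    (S : Finset ((Fin s ⊕ Fin t) × Fin m))
    (hS : S.card = m * (s + t) / 2 + 1) :
    ∃ u ∈ S, Real.sqrt (lam ^ 2 + mu ^ 2) ≤
      ((S.filter (fun v => 𝒜 u v ≠ 0)).card : ℝ) :=
  signed_cartesian_product_induced_subgraph_max_degree_general_general s t m lam mu P hP A₂ hA₂symm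
    hA₂ent A₁ hA₁ hpsd₁ hpsd₂ D hD 𝒜 h𝒜 S hS
end

section
/- Define real matrices H^{(k)} of order 2^k recursively by H^{(1)} = [[1,1],[1,−1]] and H^{(k+1)} = H^{(1)} ⊗ H^{(k)} (Kronecker product). For n ≥ 1, let A_n = [[0,1],[1,0]] ⊗ H^{(n)}, a matrix of order 2^{n+1}. Then A_n is symmetric with zero diagonal blocks and all off-block entries ±1 (so A_n is a signed adjacency matrix of the complete bipartite graph K_{2^n,2^n}), and its eigenvalues are √(2^n) and −√(2^n), each with multiplicity 2^n; that is, dim ker(A_n − √(2^n)·I) = 2^n and dim ker(A_n + √(2^n)·I) = 2^n. -/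
open Matrix Kronecker

/-- Index type for the Hadamard matrix `H^{(j+1)}` of order `2^(j+1)`. -/
def hadIdx : ℕ → Type
  | 0 => Fin 2
  | (j + 1) => Fin 2 × hadIdx j

instance hadIdxFintype : (j : ℕ) → Fintype (hadIdx j)
  | 0 => inferInstanceAs (Fintype (Fin 2))
  | (j + 1) => letI := hadIdxFintype j; inferInstanceAs (Fintype (Fin 2 × hadIdx j))

instance hadIdxDecEq : (j : ℕ) → DecidableEq (hadIdx j)
  | 0 => inferInstanceAs (DecidableEq (Fin 2))
  | (j + 1) => letI := hadIdxDecEq j; inferInstanceAs (DecidableEq (Fin 2 × hadIdx j))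

/-- `hadamardMat j` is the Hadamard matrix `H^{(j+1)}` of order `2^(j+1)`, defined recursively
by `H^{(1)} = [[1,1],[1,-1]]` and `H^{(k+1)} = H^{(1)} ⊗ H^{(k)}`. -/
def hadamardMat : (j : ℕ) → Matrix (hadIdx j) (hadIdx j) ℝ
  | 0 => !![1, 1; 1, -1]
  | (j + 1) => (!![1, 1; 1, -1] : Matrix (Fin 2) (Fin 2) ℝ) ⊗ₖ hadamardMat j

/-! With `c = √(2^n)`, the identity `H^{(n)} H^{(n)} = 2^n I` gives `A_n² = c² I`, so `ker (A_n - c)`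
and `ker (A_n + c)` are complementary. The sign matrix `diag(1, -1) ⊗ I` is invertible and
anticommutes with `A_n`, hence maps each of the two eigenspaces into the other; so they have equal
dimension, namely half of `2^(n+1)`. -/

open LinearMap Module

section
variable {K n : Type*} [Field K] [Fintype n] [DecidableEq n]

theorem Matrix.isCompl_ker_sub_smul_ker_add_smul {A : Matrix n n K} {c : K}
    (hc : (2 : K) * c ≠ 0) (hA : A * A = (c * c) • 1) :
    IsCompl (ker (A - c • 1).mulVecLin) (ker (A + c • 1).mulVecLin) := by
  have hdiff (v : n → K) : (A + c • 1) *ᵥ v - (A - c • 1) *ᵥ v = (2 * c) • v := by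
    rw [← sub_mulVec, add_sub_sub_cancel, ← two_smul K (c • 1), smul_smul, smul_mulVec,
      one_mulVec]
  have hprod : (A - c • 1) * (A + c • 1) = 0 ∧ (A + c • 1) * (A - c • 1) = 0 := by
    constructor <;>
    simp only [sub_mul, mul_add, add_mul, mul_sub, hA, Matrix.smul_mul, Matrix.mul_smul,
      one_mul, mul_one, smul_smul] <;> module
  constructor
  · rw [Submodule.disjoint_def]
    intro v hv₁ hv₂
    have h : (2 * c) • v = 0 := by
      rw [← hdiff, show (A + c • 1) *ᵥ v = 0 from hv₂, show (A - c • 1) *ᵥ v = 0 from hv₁,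
        sub_zero]
    exact (smul_eq_zero.mp h).resolve_left hc
  · rw [codisjoint_iff, eq_top_iff]
    intro v _
    refine Submodule.mem_sup.mpr ⟨(2 * c)⁻¹ • (A + c • 1) *ᵥ v, ?_,
      -((2 * c)⁻¹ • (A - c • 1) *ᵥ v), ?_, ?_⟩
    · rw [mem_ker, mulVecLin_apply, mulVec_smul, mulVec_mulVec, hprod.1, zero_mulVec,
        smul_zero]
    · rw [mem_ker, mulVecLin_apply, mulVec_neg, mulVec_smul, mulVec_mulVec, hprod.2,
        zero_mulVec, smul_zero, neg_zero]
    · rw [← sub_eq_add_neg, ← smul_sub, hdiff, smul_smul, inv_mul_cancel₀ hc, one_smul]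

theorem Matrix.finrank_ker_add_smul_le_of_anticommute {A D : Matrix n n K} (hD : IsUnit D)
    (hDA : D * A = -(A * D)) (c : K) :
    finrank K (ker (A + c • 1).mulVecLin) ≤ finrank K (ker (A - c • 1).mulVecLin) := by
  have hintertwine : (A - c • 1) * D = -(D * (A + c • 1)) := by
    rw [sub_mul, mul_add, hDA, Matrix.smul_mul, Matrix.mul_smul, one_mul, mul_one]; abel
  have hmaps : (ker (A + c • 1).mulVecLin).map D.mulVecLin ≤ ker (A - c • 1).mulVecLin := by
    rw [Submodule.map_le_iff_le_comap]
    intro v hv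
    rw [mem_ker, mulVecLin_apply] at hv
    rw [Submodule.mem_comap, mem_ker, mulVecLin_apply, mulVecLin_apply, mulVec_mulVec,
      hintertwine, neg_mulVec, ← mulVec_mulVec, hv, mulVec_zero, neg_zero]
  calc finrank K (ker (A + c • 1).mulVecLin)
      = finrank K ((ker (A + c • 1).mulVecLin).map D.mulVecLin) :=
        (Submodule.equivMapOfInjective _ (mulVec_injective_iff_isUnit.2 hD) _).finrank_eq
    _ ≤ _ := Submodule.finrank_mono hmaps

theorem Matrix.finrank_ker_sub_smul_eq_of_anticommute {A D : Matrix n n K} (hD : IsUnit D)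
    (hDA : D * A = -(A * D)) (c : K) :
    finrank K (ker (A - c • 1).mulVecLin) = finrank K (ker (A + c • 1).mulVecLin) := by
  refine le_antisymm ?_ (finrank_ker_add_smul_le_of_anticommute hD hDA c)
  have h := finrank_ker_add_smul_le_of_anticommute hD hDA (-c)
  rwa [neg_smul, sub_neg_eq_add, ← sub_eq_add_neg] at h

end

section
variable {R m : Type*} [CommRing R] [Fintype m]

theorem swap_kronecker_mul_self (H : Matrix m m R) :
    (!![0, 1; 1, 0] ⊗ₖ H) * (!![0, 1; 1, 0] ⊗ₖ H) = (1 : Matrix (Fin 2) (Fin 2) R) ⊗ₖ (H * H) := by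
  rw [← mul_kronecker_mul]
  congr 1
  ext i k; fin_cases i <;> fin_cases k <;> simp [one_apply]

variable [DecidableEq m]

theorem sign_kronecker_one_anticommute (H : Matrix m m R) :
    (!![1, 0; 0, -1] ⊗ₖ (1 : Matrix m m R)) * (!![0, 1; 1, 0] ⊗ₖ H) =
      -((!![0, 1; 1, 0] ⊗ₖ H) * (!![1, 0; 0, -1] ⊗ₖ (1 : Matrix m m R))) := by
  rw [← mul_kronecker_mul, ← mul_kronecker_mul, one_mul, mul_one]
  ext ⟨i, x⟩ ⟨k, y⟩; fin_cases i <;> fin_cases k <;> simp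

theorem sign_kronecker_one_mul_self :
    (!![1, 0; 0, -1] ⊗ₖ (1 : Matrix m m R)) * (!![1, 0; 0, -1] ⊗ₖ (1 : Matrix m m R)) = 1 := by
  rw [← mul_kronecker_mul, one_mul, ← one_kronecker_one]
  congr 1
  ext i k; fin_cases i <;> fin_cases k <;> simp [one_apply]

theorem hadamard2_mul_self :
    (!![1, 1; 1, -1] : Matrix (Fin 2) (Fin 2) R) * !![1, 1; 1, -1] = (2 : R) • 1 := by
  ext i k; fin_cases i <;> fin_cases k <;> simp [one_apply, one_add_one_eq_two]

theorem sylvester_mul_self {H : Matrix m m R} {s : R} (hH : H * H = s • 1) :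
    (!![1, 1; 1, -1] ⊗ₖ H) * (!![1, 1; 1, -1] ⊗ₖ H) = (2 * s) • 1 := by
  rw [← mul_kronecker_mul, hadamard2_mul_self, hH, smul_kronecker, kronecker_smul,
    one_kronecker_one, smul_smul]

end

theorem card_hadIdx (j : ℕ) : Fintype.card (hadIdx j) = 2 ^ (j + 1) := by
  induction j with
  | zero => rfl
  | succ j ih =>
    exact (Fintype.card_prod _ _).trans (by rw [ih, Fintype.card_fin, pow_succ' 2 (j + 1)])

theorem hadamardMat_apply_eq_one_or_neg_one (j : ℕ) (x y : hadIdx j) :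
    hadamardMat j x y = 1 ∨ hadamardMat j x y = -1 := by
  have h₁ (i k : Fin 2) : (!![1, 1; 1, -1] : Matrix (Fin 2) (Fin 2) ℝ) i k = 1 ∨
      (!![1, 1; 1, -1] : Matrix (Fin 2) (Fin 2) ℝ) i k = -1 := by
    fin_cases i <;> fin_cases k <;> simp
  induction j with
  | zero => exact h₁ x y
  | succ j ih =>
    obtain ⟨i, x⟩ := x
    obtain ⟨k, y⟩ := y
    change (!![1, 1; 1, -1] : Matrix (Fin 2) (Fin 2) ℝ) i k * hadamardMat j x y = 1 ∨
      (!![1, 1; 1, -1] : Matrix (Fin 2) (Fin 2) ℝ) i k * hadamardMat j x y = -1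
    rcases h₁ i k with h | h <;> rcases ih x y with h' | h' <;> simp [h, h']

theorem hadamardMat_transpose (j : ℕ) : (hadamardMat j)ᵀ = hadamardMat j := by
  have h₁ : (!![1, 1; 1, -1] : Matrix (Fin 2) (Fin 2) ℝ)ᵀ = !![1, 1; 1, -1] := by
    ext i k; fin_cases i <;> fin_cases k <;> rfl
  induction j with
  | zero => exact h₁
  | succ j ih => exact (kroneckerMap_transpose _ _ _).symm.trans (by rw [h₁, ih]; rfl)

theorem hadamardMat_mul_self (j : ℕ) :
    hadamardMat j * hadamardMat j = (2 : ℝ) ^ (j + 1) • 1 := by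
  induction j with
  | zero => exact hadamard2_mul_self.trans (by rw [zero_add, pow_one]; rfl)
  | succ j ih => exact (sylvester_mul_self ih).trans (by rw [← pow_succ']; rfl)

/-- For `n = j + 1 ≥ 1`, the matrix `A_n = [[0,1],[1,0]] ⊗ H^{(n)}` of order `2^(n+1)` is a
signed adjacency matrix of `K_{2^n, 2^n}` (symmetric, zero diagonal blocks, off-block entries
`±1`) whose eigenvalues are `√(2^n)` and `-√(2^n)`, each with multiplicity `2^n`. -/
theorem signed_complete_bipartite_two_eigenvalues (j : ℕ)
    (A : Matrix (Fin 2 × hadIdx j) (Fin 2 × hadIdx j) ℝ)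
    (hA : A = (!![0, 1; 1, 0] : Matrix (Fin 2) (Fin 2) ℝ) ⊗ₖ hadamardMat j) :
    Aᵀ = A ∧
    (∀ (i : Fin 2) (x y : hadIdx j), A (i, x) (i, y) = 0) ∧
    (∀ (i i' : Fin 2) (x y : hadIdx j), i ≠ i' →
      A (i, x) (i', y) = 1 ∨ A (i, x) (i', y) = -1) ∧
    Module.finrank ℝ
      (LinearMap.ker (A - Real.sqrt (2 ^ (j + 1)) •
        (1 : Matrix (Fin 2 × hadIdx j) (Fin 2 × hadIdx j) ℝ)).mulVecLin) = 2 ^ (j + 1) ∧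
    Module.finrank ℝ
      (LinearMap.ker (A + Real.sqrt (2 ^ (j + 1)) •
        (1 : Matrix (Fin 2 × hadIdx j) (Fin 2 × hadIdx j) ℝ)).mulVecLin) = 2 ^ (j + 1) := by
  subst hA
  set c := Real.sqrt (2 ^ (j + 1))
  have hcc : c * c = 2 ^ (j + 1) := Real.mul_self_sqrt (by positivity)
  have hc : (2 : ℝ) * c ≠ 0 := by positivity
  have hAA := swap_kronecker_mul_self (hadamardMat j)
  rw [hadamardMat_mul_self, kronecker_smul, one_kronecker_one, ← hcc] at hAA
  have hsum := Submodule.finrank_add_eq_of_isCompl (isCompl_ker_sub_smul_ker_add_smul hc hAA)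
  rw [finrank_fintype_fun_eq_card, Fintype.card_prod, Fintype.card_fin, card_hadIdx] at hsum
  have heq := finrank_ker_sub_smul_eq_of_anticommute
    (IsUnit.of_mul_eq_one _ sign_kronecker_one_mul_self)
    (sign_kronecker_one_anticommute (hadamardMat j)) c
  refine ⟨?_, ?_, ?_, by omega, by omega⟩
  · rw [← kroneckerMap_transpose, hadamardMat_transpose]
    congr 1
    ext i k; fin_cases i <;> fin_cases k <;> rfl
  · intro i x y
    fin_cases i <;> simp
  · intro i i' x y hi
    fin_cases i <;> fin_cases i' <;> simp_all [hadamardMat_apply_eq_one_or_neg_one]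
end

section
/- Let n ≥ 3 and let P be the n×n cyclic shift permutation matrix, P_{ij} = 1 if j ≡ i+1 (mod n) and P_{ij} = 0 otherwise, so that P + Pᵀ is the adjacency matrix of the cycle C_n. Let A be the 2n×2n block matrix A = [[P+Pᵀ, P−Pᵀ],[Pᵀ−P, −(P+Pᵀ)]]. Then A is a real symmetric matrix with zero diagonal and entries in {-1,0,1}, and its eigenvalues are 2 and −2, each with multiplicity n; that is, dim ker(A − 2·I_{2n}) = n and dim ker(A + 2·I_{2n}) = n. -/
/-!
`A` squares to `4` because `P` is orthogonal, so `ℝ^{2n}` splits into the eigenspaces of `2` and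
`-2`. The swap `J = [[0, 1], [1, 0]]` anticommutes with `A`, hence maps one eigenspace onto the
other, and the two therefore have the same dimension `n`. The entry conditions hold because the
cyclic shift has no fixed points and no `2`-cycles once `n ≥ 3`.
-/

open Matrix Module Module.End

namespace Module.End

variable {K V : Type*} [Field K] [AddCommGroup V] [Module K V] {f : End K V} {c : K}

theorem isCompl_eigenspace_eigenspace_neg (hc : c ≠ -c) (hf : f * f = c ^ 2 • 1) :
    IsCompl (f.eigenspace c) (f.eigenspace (-c)) := by
  obtain ⟨d, hd⟩ : ∃ d, d * (2 * c) = 1 :=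
    ⟨_, inv_mul_cancel₀ fun h => hc (by linear_combination h)⟩
  have hff : ∀ w, f (f w) = c ^ 2 • w := fun w => by simpa using LinearMap.congr_fun hf w
  refine ⟨f.disjoint_genEigenspace hc 1 1, codisjoint_iff.mpr (eq_top_iff.mpr fun v _ => ?_)⟩
  refine Submodule.mem_sup.mpr ⟨d • (f v + c • v), ?_, d • (c • v - f v), ?_, ?_⟩
  · rw [mem_eigenspace_iff, map_smul, map_add, map_smul, hff]
    module
  · rw [mem_eigenspace_iff, map_smul, map_sub, map_smul, hff]
    module
  · match_scalars
    · ring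
    · linear_combination hd

theorem map_eigenspace_eq_eigenspace_neg (j : V ≃ₗ[K] V) (hj : ∀ v, f (j v) = -j (f v))
    (μ : K) : (f.eigenspace μ).map (j : V →ₗ[K] V) = f.eigenspace (-μ) := by
  ext w
  have hw : f w = -j (f (j.symm w)) := by simpa using hj (j.symm w)
  rw [Submodule.mem_map_equiv, mem_eigenspace_iff, mem_eigenspace_iff, hw, neg_smul, neg_inj,
    ← j.injective.eq_iff, map_smul, j.apply_symm_apply]

theorem two_mul_finrank_eigenspace [FiniteDimensional K V] (hc : c ≠ -c)
    (hf : f * f = c ^ 2 • 1) (j : V ≃ₗ[K] V) (hj : ∀ v, f (j v) = -j (f v)) :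
    2 * finrank K (f.eigenspace c) = finrank K V := by
  rw [← Submodule.finrank_add_eq_of_isCompl (isCompl_eigenspace_eigenspace_neg hc hf),
    ← map_eigenspace_eq_eigenspace_neg j hj, LinearEquiv.finrank_map_eq, two_mul]

end Module.End

namespace Matrix

section Eigenspace

variable {ι K : Type*} [Fintype ι] [DecidableEq ι] [Field K]

theorem ker_mulVecLin_sub_smul_one (A : Matrix ι ι K) (c : K) :
    LinearMap.ker (A - c • 1).mulVecLin = eigenspace (toLin' A) c := by
  rw [eigenspace_def, ← toLin'_apply', map_sub, map_smul, toLin'_one, one_eq_id]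

theorem two_mul_finrank_ker_sub_smul_one {A J : Matrix ι ι K} {c : K} (hc : c ≠ -c)
    (hA : A * A = c ^ 2 • 1) (hJ : J * J = 1) (hAJ : A * J = -(J * A)) :
    2 * finrank K (LinearMap.ker (A - c • 1).mulVecLin) = Fintype.card ι := by
  have hJ' : Function.Involutive (toLin' J) := fun v => by
    rw [toLin'_apply, toLin'_apply, mulVec_mulVec, hJ, one_mulVec]
  rw [ker_mulVecLin_sub_smul_one, ← finrank_fintype_fun_eq_card K]
  refine two_mul_finrank_eigenspace hc ?_ (.ofInvolutive _ hJ') fun v => ?_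
  · rw [mul_eq_comp, ← toLin'_mul, hA, map_smul, toLin'_one, one_eq_id]
  · simp only [LinearEquiv.coe_ofInvolutive, toLin'_apply, mulVec_mulVec, hAJ, neg_mulVec]

end Eigenspace

section Permutation

variable {ι R : Type*} [DecidableEq ι] {σ : Equiv.Perm ι}

theorem permMatrix_apply_self [Zero R] [One R] {i : ι} (hσ : σ i ≠ i) : σ.permMatrix R i i = 0 := by
  simp [Equiv.toPEquiv_apply, hσ]

theorem permMatrix_apply_cases [Zero R] [One R] (hσ : ∀ i, σ (σ i) ≠ i) (i j : ι) :
    (σ.permMatrix R i j = 0 ∧ σ.permMatrix R j i = 0) ∨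
      (σ.permMatrix R i j = 1 ∧ σ.permMatrix R j i = 0) ∨
      (σ.permMatrix R i j = 0 ∧ σ.permMatrix R j i = 1) := by
  simp only [PEquiv.toMatrix_apply, Equiv.toPEquiv_apply, Option.mem_def, Option.some.injEq]
  by_cases hij : σ i = j
  · subst hij
    simp [hσ i]
  · by_cases hji : σ j = i <;> simp [hij, hji]

theorem permMatrix_mul_transpose [Fintype ι] [NonAssocSemiring R] :
    σ.permMatrix R * (σ.permMatrix R)ᵀ = 1 := by
  rw [transpose_permMatrix, ← permMatrix_mul, inv_mul_cancel, permMatrix_one]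

end Permutation

end Matrix

section Tessellation

variable {n R : Type*}

/-- For the cyclic shift `P` this is the signed adjacency matrix of the toroidal tessellation
`T_{2n}`. -/
def tessellationMatrix [AddCommGroup R] (P : Matrix n n R) : Matrix (n ⊕ n) (n ⊕ n) R :=
  fromBlocks (P + Pᵀ) (P - Pᵀ) (Pᵀ - P) (-(P + Pᵀ))

theorem tessellationMatrix_transpose [AddCommGroup R] (P : Matrix n n R) :
    (tessellationMatrix P)ᵀ = tessellationMatrix P := by
  rw [tessellationMatrix, fromBlocks_transpose]
  congr 1 <;> simp only [transpose_add, transpose_neg, transpose_transpose] <;> abel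

theorem tessellationMatrix_apply_self [AddCommGroup R] {P : Matrix n n R} (hP : ∀ i, P i i = 0)
    (i : n ⊕ n) : tessellationMatrix P i i = 0 := by
  rcases i with i | i <;> simp [tessellationMatrix, hP i]

theorem tessellationMatrix_apply_cases [Ring R] {P : Matrix n n R}
    (hP : ∀ i j, (P i j = 0 ∧ P j i = 0) ∨ (P i j = 1 ∧ P j i = 0) ∨ (P i j = 0 ∧ P j i = 1))
    (i j : n ⊕ n) :
    tessellationMatrix P i j = -1 ∨ tessellationMatrix P i j = 0 ∨ tessellationMatrix P i j = 1 := by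
  rcases i with i | i <;> rcases j with j | j <;>
    rcases hP i j with ⟨hij, hji⟩ | ⟨hij, hji⟩ | ⟨hij, hji⟩ <;>
    simp [tessellationMatrix, hij, hji]

variable [DecidableEq n] [Fintype n]

theorem tessellationMatrix_mul_self [CommRing R] {P : Matrix n n R} (hP : P * Pᵀ = 1) :
    tessellationMatrix P * tessellationMatrix P = (2 : R) ^ 2 • 1 := by
  have hP' : Pᵀ * P = 1 := mul_eq_one_comm.mp hP
  rw [tessellationMatrix, fromBlocks_multiply, ← fromBlocks_one, fromBlocks_smul]
  congr 1 <;> noncomm_ring <;> simp only [hP, hP'] <;> module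

theorem tessellationMatrix_mul_swap [Ring R] (P : Matrix n n R) :
    tessellationMatrix P * fromBlocks 0 1 1 0 = -(fromBlocks 0 1 1 0 * tessellationMatrix P) := by
  simp only [tessellationMatrix, fromBlocks_multiply, fromBlocks_neg]
  congr 1 <;> simp

end Tessellation

theorem Fin.add_one_add_one_ne_self {n : ℕ} [NeZero n] (hn : 3 ≤ n) (i : Fin n) :
    i + 1 + 1 ≠ i := by
  rw [add_assoc, Ne, add_eq_left, Fin.ext_iff, Fin.val_add, Fin.val_one', Fin.val_zero,
    Nat.one_mod_eq_one.mpr (by omega), Nat.mod_eq_of_lt (by omega)]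
  omega

theorem eq_permMatrix_addRight_one {n : ℕ} [NeZero n] {R : Type*} [Zero R] [One R]
    {P : Matrix (Fin n) (Fin n) R}
    (hP : ∀ i j : Fin n, P i j = if (j : ℕ) = ((i : ℕ) + 1) % n then 1 else 0) :
    P = (Equiv.addRight 1 : Equiv.Perm (Fin n)).permMatrix R := by
  ext i j
  simp only [hP, PEquiv.toMatrix_apply, Equiv.toPEquiv_apply, Option.mem_def, Option.some.injEq,
    Equiv.coe_addRight, Fin.ext_iff, Fin.val_add, Fin.val_one', Nat.add_mod_mod, eq_comm]

/-- Let `n ≥ 3`, let `P` be the `n × n` cyclic shift permutation matrix (so `P + Pᵀ` is the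
adjacency matrix of the cycle `C_n`), and let
`A = [[P + Pᵀ, P − Pᵀ], [Pᵀ − P, −(P + Pᵀ)]]` be the signed adjacency matrix of the toroidal
tessellation `T_{2n}`.  Then `A` is symmetric with zero diagonal and entries in `{-1,0,1}`, and
its eigenvalues are `2` and `−2`, each with multiplicity `n`. -/
theorem toroidal_tessellation_two_eigenvalues (n : ℕ) (hn : 3 ≤ n)
    (P : Matrix (Fin n) (Fin n) ℝ)
    (hP : ∀ i j : Fin n, P i j = if (j : ℕ) = ((i : ℕ) + 1) % n then 1 else 0)
    (A : Matrix (Fin n ⊕ Fin n) (Fin n ⊕ Fin n) ℝ)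
    (hA : A = Matrix.fromBlocks (P + Pᵀ) (P - Pᵀ) (Pᵀ - P) (-(P + Pᵀ))) :
    Aᵀ = A ∧
    (∀ i, A i i = 0) ∧
    (∀ i j, A i j = -1 ∨ A i j = 0 ∨ A i j = 1) ∧
    Module.finrank ℝ
      (LinearMap.ker (A - (2 : ℝ) •
        (1 : Matrix (Fin n ⊕ Fin n) (Fin n ⊕ Fin n) ℝ)).mulVecLin) = n ∧
    Module.finrank ℝ
      (LinearMap.ker (A + (2 : ℝ) •
        (1 : Matrix (Fin n ⊕ Fin n) (Fin n ⊕ Fin n) ℝ)).mulVecLin) = n := by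
  have : NeZero n := ⟨by omega⟩
  set σ : Equiv.Perm (Fin n) := Equiv.addRight 1
  have hσ : ∀ i, σ (σ i) ≠ i := Fin.add_one_add_one_ne_self hn
  obtain rfl := eq_permMatrix_addRight_one hP
  obtain rfl : A = tessellationMatrix (σ.permMatrix ℝ) := hA
  have hA2 := tessellationMatrix_mul_self (permMatrix_mul_transpose (R := ℝ) (σ := σ))
  have hJ : (fromBlocks 0 1 1 0 : Matrix (Fin n ⊕ Fin n) (Fin n ⊕ Fin n) ℝ) *
      fromBlocks 0 1 1 0 = 1 := by
    simp [fromBlocks_multiply]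
  have hdim := two_mul_finrank_ker_sub_smul_one (by norm_num) hA2 hJ
    (tessellationMatrix_mul_swap _)
  have hdim' := two_mul_finrank_ker_sub_smul_one (c := -2) (by norm_num) (by simpa using hA2) hJ
    (tessellationMatrix_mul_swap _)
  refine ⟨tessellationMatrix_transpose _,
    tessellationMatrix_apply_self fun i => permMatrix_apply_self fun hi => hσ i (by rw [hi, hi]),
    tessellationMatrix_apply_cases (permMatrix_apply_cases hσ), ?_, ?_⟩
  · rw [Fintype.card_sum, Fintype.card_fin] at hdim
    omega
  · rw [neg_smul, sub_neg_eq_add, Fintype.card_sum, Fintype.card_fin] at hdim'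
    omega
end

section
/- Let P be any real s×(n−s) matrix, let A₁ be the n×n block matrix [[0_s, P],[Pᵀ, 0_{n−s}]], let D = diag(I_s, −I_{n−s}) (block diagonal n×n), and let A₂ be any real m×m matrix. Then (A₁⊗I_m + D⊗A₂)² = A₁²⊗I_m + I_n⊗A₂². -/
open Matrix Kronecker

/-- For any real `s × (n−s)` matrix `P`, with `A₁ = [[0, P], [Pᵀ, 0]]` and
`D = diag(I_s, −I_{n−s})`, and any real `m × m` matrix `A₂`, the signed Cartesian product
matrix satisfies `(A₁ ⊗ I_m + D ⊗ A₂)² = A₁² ⊗ I_m + I_n ⊗ A₂²`. -/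
theorem signed_cartesian_product_sq (s t m : ℕ)
    (P : Matrix (Fin s) (Fin t) ℝ) (A₂ : Matrix (Fin m) (Fin m) ℝ)
    (A₁ : Matrix (Fin s ⊕ Fin t) (Fin s ⊕ Fin t) ℝ)
    (hA₁ : A₁ = Matrix.fromBlocks 0 P Pᵀ 0)
    (D : Matrix (Fin s ⊕ Fin t) (Fin s ⊕ Fin t) ℝ)
    (hD : D = Matrix.fromBlocks 1 0 0 (-1)) :
    (A₁ ⊗ₖ (1 : Matrix (Fin m) (Fin m) ℝ) + D ⊗ₖ A₂) ^ 2
      = (A₁ ^ 2) ⊗ₖ (1 : Matrix (Fin m) (Fin m) ℝ)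
        + (1 : Matrix (Fin s ⊕ Fin t) (Fin s ⊕ Fin t) ℝ) ⊗ₖ (A₂ ^ 2) := by
  have hAD : A₁ * D + D * A₁ = 0 := by
    subst hA₁ hD
    simp [Matrix.fromBlocks_multiply, Matrix.fromBlocks_add]
  have hD2 : D * D = 1 := by
    subst hD
    simp [Matrix.fromBlocks_multiply, ← Matrix.fromBlocks_one]
  rw [sq, add_mul, mul_add, mul_add, ← mul_kronecker_mul, ← mul_kronecker_mul,
    ← mul_kronecker_mul, ← mul_kronecker_mul, hD2]
  simp only [one_mul, mul_one]
  have h0 : (A₁ * D) ⊗ₖ A₂ + (D * A₁) ⊗ₖ A₂ = 0 := by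
    rw [← add_kronecker, hAD, zero_kronecker]
  rw [sq, sq]
  abel_nf
  rw [← add_assoc ((A₁ * D) ⊗ₖ A₂) ((D * A₁) ⊗ₖ A₂), h0, zero_add]
end

section
/- Let P be any real s×(n−s) matrix, let A₁ be the n×n block matrix [[0_s, P],[Pᵀ, 0_{n−s}]], let D = diag(I_s, −I_{n−s}) (block diagonal n×n), and let A₂ be any real m×m matrix. Then ((A₁ + D)⊗A₂)² = (A₁² + I_n)⊗A₂². -/
open Matrix Kronecker

/-- For any real `s × (n−s)` matrix `P`, with `A₁ = [[0, P], [Pᵀ, 0]]` and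
`D = diag(I_s, −I_{n−s})`, and any real `m × m` matrix `A₂`, the signed semi-strong product
matrix satisfies `((A₁ + D) ⊗ A₂)² = (A₁² + I_n) ⊗ A₂²`. -/
theorem signed_semi_strong_product_sq (s t m : ℕ)
    (P : Matrix (Fin s) (Fin t) ℝ) (A₂ : Matrix (Fin m) (Fin m) ℝ)
    (A₁ : Matrix (Fin s ⊕ Fin t) (Fin s ⊕ Fin t) ℝ)
    (hA₁ : A₁ = Matrix.fromBlocks 0 P Pᵀ 0)
    (D : Matrix (Fin s ⊕ Fin t) (Fin s ⊕ Fin t) ℝ)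
    (hD : D = Matrix.fromBlocks 1 0 0 (-1)) :
    ((A₁ + D) ⊗ₖ A₂) ^ 2
      = (A₁ ^ 2 + (1 : Matrix (Fin s ⊕ Fin t) (Fin s ⊕ Fin t) ℝ)) ⊗ₖ (A₂ ^ 2) := by
  have key : (A₁ + D) * (A₁ + D) = A₁ ^ 2 + 1 := by
    subst hA₁ hD
    simp [add_mul, mul_add, pow_two, Matrix.fromBlocks_multiply,
      Matrix.fromBlocks_add, ← Matrix.fromBlocks_one]
    ext (i | i) (j | j) <;> simp [Matrix.fromBlocks, add_comm]
  rw [pow_two, ← Matrix.mul_kronecker_mul, key, ← pow_two]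
end

section
/- Let A₁ be an n×n real symmetric matrix of block form [[0_s, P],[Pᵀ, 0_{n−s}]], let A₂ be an m×m real symmetric matrix, let D = diag(I_s, −I_{n−s}), and set 𝒜 = A₁⊗I_m + D⊗A₂ and 𝒜' = (A₁+D)⊗A₂. Let λ², μ² ≥ 0 be real numbers such that λ² is an eigenvalue of A₁² with multiplicity p and μ² is an eigenvalue of A₂² with multiplicity q. Then λ² + μ² is an eigenvalue of 𝒜² with multiplicity at least p·q, and (λ² + 1)·μ² is an eigenvalue of (𝒜')² with multiplicity at least p·q; that is, dim ker(𝒜² − (λ²+μ²)·I_{mn}) ≥ p·q and dim ker((𝒜')² − (λ²+1)μ²·I_{mn}) ≥ p·q. -/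
open Matrix Kronecker
open scoped TensorProduct

/-!
Because `D² = 1` and `D` anticommutes with the bipartite matrix `A₁`, the cross terms cancel when
the two products are squared: `𝒜² = A₁² ⊗ I + I ⊗ A₂²` and `𝒜'² = (A₁² + I) ⊗ A₂²`. Hence for
eigenvectors `x` of `A₁²` (eigenvalue `λ²`) and `y` of `A₂²` (eigenvalue `μ²`) the vector `x ⊗ y`
is an eigenvector of `𝒜²` for `λ² + μ²` and of `𝒜'²` for `(λ² + 1) μ²`. Tensoring vectors is
injective on the tensor product of the two eigenspaces of dimension `p` and `q`, so both
eigenspaces of the squares have dimension at least `p q`.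
-/

section ProductVectors

variable {K α β : Type*}

variable (K α β) in
noncomputable def funTensorFunEquiv [CommSemiring K] [Finite α] [Finite β] :
    ((α → K) ⊗[K] (β → K)) ≃ₗ[K] (α × β → K) :=
  (TensorProduct.congr (Finsupp.linearEquivFunOnFinite K K α).symm
      (Finsupp.linearEquivFunOnFinite K K β).symm).trans
    ((finsuppTensorFinsupp' K α β).trans (Finsupp.linearEquivFunOnFinite K K (α × β)))

@[simp]
lemma funTensorFunEquiv_tmul [CommSemiring K] [Finite α] [Finite β] (x : α → K) (y : β → K) :
    funTensorFunEquiv K α β (x ⊗ₜ y) = fun p => x p.1 * y p.2 := by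
  funext ⟨i, j⟩
  simp [funTensorFunEquiv, finsuppTensorFinsupp'_apply_apply]

variable [Field K] [Finite α] [Finite β]

theorem finrank_mul_finrank_le_of_forall_mul_mem (V₁ : Submodule K (α → K))
    (V₂ : Submodule K (β → K)) (W : Submodule K (α × β → K))
    (h : ∀ x ∈ V₁, ∀ y ∈ V₂, (fun p : α × β => x p.1 * y p.2) ∈ W) :
    Module.finrank K V₁ * Module.finrank K V₂ ≤ Module.finrank K W := by
  let f : V₁ ⊗[K] V₂ →ₗ[K] α × β → K :=
    (funTensorFunEquiv K α β).toLinearMap ∘ₗ TensorProduct.map V₁.subtype V₂.subtype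
  have hf_inj : Function.Injective f := by
    refine (funTensorFunEquiv K α β).injective.comp ?_
    rw [← LinearMap.lTensor_comp_rTensor]
    exact (Module.Flat.lTensor_preserves_injective_linearMap _ V₂.injective_subtype).comp
      (Module.Flat.rTensor_preserves_injective_linearMap _ V₁.injective_subtype)
  have hf_range : ∀ z, f z ∈ W := by
    intro z
    induction z using TensorProduct.induction_on with
    | zero => simp
    | tmul x y => simpa [f] using h x x.2 y y.2
    | add z₁ z₂ h₁ h₂ => simpa using W.add_mem h₁ h₂
  calc Module.finrank K V₁ * Module.finrank K V₂
      = Module.finrank K (V₁ ⊗[K] V₂) := Module.finrank_tensorProduct.symm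
    _ ≤ Module.finrank K W :=
      LinearMap.finrank_le_finrank_of_injective (f := f.codRestrict W hf_range)
        fun _ _ hab => hf_inj (congrArg Subtype.val hab)

end ProductVectors

section Kronecker

variable {R l m n o : Type*} [CommSemiring R] [Fintype m] [Fintype o]

theorem kronecker_mulVec_mul (A : Matrix l m R) (B : Matrix n o R) (x : m → R) (y : o → R) :
    (A ⊗ₖ B) *ᵥ (fun p : m × o => x p.1 * y p.2) = fun p => (A *ᵥ x) p.1 * (B *ᵥ y) p.2 := by
  funext ⟨i, j⟩
  simp only [mulVec, dotProduct, kroneckerMap_apply, Fintype.sum_prod_type, Finset.sum_mul_sum]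
  exact Finset.sum_congr rfl fun k _ => Finset.sum_congr rfl fun l _ => by ring

end Kronecker

section Eigenspaces

variable {K α β : Type*} [Field K] [Fintype α] [Fintype β] [DecidableEq α] [DecidableEq β]

theorem mem_ker_sub_smul_one_iff {M : Matrix α α K} {c : K} {x : α → K} :
    x ∈ LinearMap.ker (M - c • 1).mulVecLin ↔ M *ᵥ x = c • x := by
  rw [LinearMap.mem_ker, mulVecLin_apply, sub_mulVec, smul_mulVec, one_mulVec, sub_eq_zero]

theorem finrank_ker_mul_le_finrank_ker_kronecker (A : Matrix α α K) (B : Matrix β β K) (a b : K) :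
    Module.finrank K (LinearMap.ker (A - a • 1).mulVecLin) *
        Module.finrank K (LinearMap.ker (B - b • 1).mulVecLin) ≤
      Module.finrank K (LinearMap.ker (A ⊗ₖ B - (a * b) • 1).mulVecLin) := by
  refine finrank_mul_finrank_le_of_forall_mul_mem _ _ _ fun x hx y hy => ?_
  rw [mem_ker_sub_smul_one_iff] at hx hy ⊢
  rw [kronecker_mulVec_mul, hx, hy]
  funext p
  simp only [Pi.smul_apply, smul_eq_mul]
  ring

theorem finrank_ker_mul_le_finrank_ker_kronecker_sum (A : Matrix α α K) (B : Matrix β β K)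
    (a b : K) :
    Module.finrank K (LinearMap.ker (A - a • 1).mulVecLin) *
        Module.finrank K (LinearMap.ker (B - b • 1).mulVecLin) ≤
      Module.finrank K (LinearMap.ker (A ⊗ₖ 1 + 1 ⊗ₖ B - (a + b) • 1).mulVecLin) := by
  refine finrank_mul_finrank_le_of_forall_mul_mem _ _ _ fun x hx y hy => ?_
  rw [mem_ker_sub_smul_one_iff] at hx hy ⊢
  rw [add_mulVec, kronecker_mulVec_mul, kronecker_mulVec_mul, hx, hy, one_mulVec, one_mulVec]
  funext p
  simp only [Pi.add_apply, Pi.smul_apply, smul_eq_mul]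
  ring

end Eigenspaces

section Anticommuting

theorem add_sq_of_anticomm {S : Type*} [Ring S] {a b : S} (h : a * b + b * a = 0) :
    (a + b) ^ 2 = a ^ 2 + b ^ 2 := by
  rw [show (a + b) ^ 2 = a ^ 2 + b ^ 2 + (a * b + b * a) by noncomm_ring, h, add_zero]

variable {R n m : Type*} [CommRing R] [Fintype n] [DecidableEq n] [Fintype m] [DecidableEq m]
  {A D : Matrix n n R}

theorem kronecker_one_add_kronecker_sq (hAD : A * D + D * A = 0) (hDD : D * D = 1)
    (B : Matrix m m R) :
    (A ⊗ₖ (1 : Matrix m m R) + D ⊗ₖ B) ^ 2 = (A ^ 2) ⊗ₖ 1 + 1 ⊗ₖ (B ^ 2) := by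
  have hcross : (A ⊗ₖ (1 : Matrix m m R)) * (D ⊗ₖ B) + (D ⊗ₖ B) * (A ⊗ₖ 1) = 0 := by
    rw [← mul_kronecker_mul, ← mul_kronecker_mul, Matrix.one_mul, Matrix.mul_one, ← add_kronecker,
      hAD, zero_kronecker]
  rw [add_sq_of_anticomm hcross, pow_two, pow_two, ← mul_kronecker_mul, ← mul_kronecker_mul, hDD,
    Matrix.one_mul, ← pow_two, ← pow_two]

theorem add_kronecker_sq (hAD : A * D + D * A = 0) (hDD : D * D = 1) (B : Matrix m m R) :
    ((A + D) ⊗ₖ B) ^ 2 = (A ^ 2 + 1) ⊗ₖ (B ^ 2) := by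
  rw [pow_two, ← mul_kronecker_mul, ← pow_two, ← pow_two, add_sq_of_anticomm hAD, pow_two D, hDD]

end Anticommuting

section Blocks

variable {R s t : Type*} [Ring R] [DecidableEq s] [DecidableEq t] [Fintype s] [Fintype t]

theorem fromBlocks_zero_anticomm_signature (P : Matrix s t R) (Q : Matrix t s R) :
    fromBlocks 0 P Q 0 * fromBlocks 1 0 0 (-1) + fromBlocks 1 0 0 (-1) * fromBlocks 0 P Q 0 =
      0 := by
  simp [fromBlocks_multiply, fromBlocks_add]

theorem fromBlocks_one_neg_one_mul_self :
    fromBlocks (1 : Matrix s s R) 0 0 (-1 : Matrix t t R) * fromBlocks 1 0 0 (-1) = 1 := by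
  simp [fromBlocks_multiply, fromBlocks_one]

end Blocks

theorem eigenvalue_of_squared_signed_products_general (s t m : ℕ)
    (P : Matrix (Fin s) (Fin t) ℝ)
    (A₂ : Matrix (Fin m) (Fin m) ℝ)
    (A₁ : Matrix (Fin s ⊕ Fin t) (Fin s ⊕ Fin t) ℝ)
    (hA₁ : A₁ = Matrix.fromBlocks 0 P Pᵀ 0)
    (D : Matrix (Fin s ⊕ Fin t) (Fin s ⊕ Fin t) ℝ)
    (hD : D = Matrix.fromBlocks 1 0 0 (-1))
    (𝒜 𝒜' : Matrix ((Fin s ⊕ Fin t) × Fin m) ((Fin s ⊕ Fin t) × Fin m) ℝ)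
    (h𝒜 : 𝒜 = A₁ ⊗ₖ (1 : Matrix (Fin m) (Fin m) ℝ) + D ⊗ₖ A₂)
    (h𝒜' : 𝒜' = (A₁ + D) ⊗ₖ A₂)
    (lam mu : ℝ) (p q : ℕ)
    (hp : Module.finrank ℝ (LinearMap.ker (A₁ ^ 2 - (lam ^ 2) •
      (1 : Matrix (Fin s ⊕ Fin t) (Fin s ⊕ Fin t) ℝ)).mulVecLin) = p)
    (hq : Module.finrank ℝ (LinearMap.ker (A₂ ^ 2 - (mu ^ 2) •
      (1 : Matrix (Fin m) (Fin m) ℝ)).mulVecLin) = q) :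
    p * q ≤ Module.finrank ℝ (LinearMap.ker (𝒜 ^ 2 - (lam ^ 2 + mu ^ 2) •
      (1 : Matrix ((Fin s ⊕ Fin t) × Fin m) ((Fin s ⊕ Fin t) × Fin m) ℝ)).mulVecLin) ∧
    p * q ≤ Module.finrank ℝ (LinearMap.ker (𝒜' ^ 2 - ((lam ^ 2 + 1) * mu ^ 2) •
      (1 : Matrix ((Fin s ⊕ Fin t) × Fin m) ((Fin s ⊕ Fin t) × Fin m) ℝ)).mulVecLin) := by
  have hAD : A₁ * D + D * A₁ = 0 := hA₁ ▸ hD ▸ fromBlocks_zero_anticomm_signature P Pᵀ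
  have hDD : D * D = 1 := hD ▸ fromBlocks_one_neg_one_mul_self
  have hshift : A₁ ^ 2 + 1 - (lam ^ 2 + 1) • (1 : Matrix (Fin s ⊕ Fin t) (Fin s ⊕ Fin t) ℝ) =
      A₁ ^ 2 - lam ^ 2 • 1 := by
    rw [add_smul, one_smul]
    abel
  subst hp hq h𝒜 h𝒜'
  constructor
  · rw [kronecker_one_add_kronecker_sq hAD hDD]
    exact finrank_ker_mul_le_finrank_ker_kronecker_sum _ _ _ _
  · rw [add_kronecker_sq hAD hDD, ← hshift]
    exact finrank_ker_mul_le_finrank_ker_kronecker _ _ _ _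

/-- If `λ²` is an eigenvalue of `A₁²` with multiplicity `p` and `μ²` is an eigenvalue of `A₂²`
with multiplicity `q`, where `A₁ = [[0,P],[Pᵀ,0]]` and `A₂` is symmetric, then `λ² + μ²` is an
eigenvalue of `𝒜²` with multiplicity at least `p·q`, and `(λ² + 1)·μ²` is an eigenvalue of
`(𝒜')²` with multiplicity at least `p·q`, where `𝒜 = A₁ ⊗ I_m + D ⊗ A₂` and
`𝒜' = (A₁ + D) ⊗ A₂`. -/
theorem eigenvalue_of_squared_signed_products (s t m : ℕ)
    (P : Matrix (Fin s) (Fin t) ℝ)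
    (A₂ : Matrix (Fin m) (Fin m) ℝ) (hA₂symm : A₂.IsSymm)
    (A₁ : Matrix (Fin s ⊕ Fin t) (Fin s ⊕ Fin t) ℝ)
    (hA₁ : A₁ = Matrix.fromBlocks 0 P Pᵀ 0)
    (D : Matrix (Fin s ⊕ Fin t) (Fin s ⊕ Fin t) ℝ)
    (hD : D = Matrix.fromBlocks 1 0 0 (-1))
    (𝒜 𝒜' : Matrix ((Fin s ⊕ Fin t) × Fin m) ((Fin s ⊕ Fin t) × Fin m) ℝ)
    (h𝒜 : 𝒜 = A₁ ⊗ₖ (1 : Matrix (Fin m) (Fin m) ℝ) + D ⊗ₖ A₂)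
    (h𝒜' : 𝒜' = (A₁ + D) ⊗ₖ A₂)
    (lam mu : ℝ) (p q : ℕ) (hp0 : 0 < p) (hq0 : 0 < q)
    (hp : Module.finrank ℝ (LinearMap.ker (A₁ ^ 2 - (lam ^ 2) •
      (1 : Matrix (Fin s ⊕ Fin t) (Fin s ⊕ Fin t) ℝ)).mulVecLin) = p)
    (hq : Module.finrank ℝ (LinearMap.ker (A₂ ^ 2 - (mu ^ 2) •
      (1 : Matrix (Fin m) (Fin m) ℝ)).mulVecLin) = q) :
    p * q ≤ Module.finrank ℝ (LinearMap.ker (𝒜 ^ 2 - (lam ^ 2 + mu ^ 2) •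
      (1 : Matrix ((Fin s ⊕ Fin t) × Fin m) ((Fin s ⊕ Fin t) × Fin m) ℝ)).mulVecLin) ∧
    p * q ≤ Module.finrank ℝ (LinearMap.ker (𝒜' ^ 2 - ((lam ^ 2 + 1) * mu ^ 2) •
      (1 : Matrix ((Fin s ⊕ Fin t) × Fin m) ((Fin s ⊕ Fin t) × Fin m) ℝ)).mulVecLin) :=
  eigenvalue_of_squared_signed_products_general s t m P A₂ A₁ hA₁ D hD 𝒜 𝒜' h𝒜 h𝒜' lam mu p q hp hq
end

section
/- Let A₁ be an n×n real symmetric matrix of block form [[0_s, P],[Pᵀ, 0_{n−s}]], let A₂ be an m×m real symmetric matrix, let D = diag(I_s, −I_{n−s}), and set 𝒜 = A₁⊗I_m + D⊗A₂ and 𝒜' = (A₁+D)⊗A₂. Suppose 0 is an eigenvalue of A₁ with multiplicity p, let μ ≠ 0 be a real number such that μ² is an eigenvalue of A₂² with multiplicity q, and let t = dim ker(A₂ − μ·I_m) be the multiplicity of μ as an eigenvalue of A₂ (possibly t = 0). Then dim ker(𝒜 − μ·I_{mn}) ≥ (p·q + (n−2s)(q−2t))/2 and dim ker(𝒜 + μ·I_{mn})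 ≥ (p·q − (n−2s)(q−2t))/2, and the same two lower bounds hold with 𝒜 replaced by 𝒜'. -/
open Matrix Kronecker

open Module LinearMap

private lemma li_mul {α β ι κ : Type*} [Fintype α] [Fintype β] [Fintype ι] [Fintype κ]
    (u : ι → α → ℝ) (v : κ → β → ℝ)
    (hu : LinearIndependent ℝ u) (hv : LinearIndependent ℝ v) :
    LinearIndependent ℝ (fun x : ι × κ => fun kl : α × β => u x.1 kl.1 * v x.2 kl.2) := by
  rw [Fintype.linearIndependent_iff]
  intro g hg
  have hkl : ∀ (k : α) (l : β), ∑ x : ι × κ, g x * (u x.1 k * v x.2 l) = 0 := by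
    intro k l
    have := congrFun hg (k, l)
    simpa using this
  have hcoef : ∀ (i : ι) (l : β), (∑ j, g (i, j) * v j l) = 0 := by
    intro i l
    refine Fintype.linearIndependent_iff.mp hu (fun i => ∑ j, g (i, j) * v j l) ?_ i
    funext k
    have h0 := hkl k l
    rw [Fintype.sum_prod_type] at h0
    simp only [Finset.sum_apply, Pi.smul_apply, smul_eq_mul, Pi.zero_apply]
    rw [← h0]
    congr 1; funext i; rw [Finset.sum_mul]; congr 1; funext j; ring
  rintro ⟨i, j⟩
  refine Fintype.linearIndependent_iff.mp hv (fun j => g (i, j)) ?_ j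
  funext l
  have := hcoef i l
  simpa using this

private lemma pure_mulVec {α β : Type*} [Fintype α] [Fintype β]
    (A : Matrix α α ℝ) (B : Matrix β β ℝ) (x : α → ℝ) (y : β → ℝ) :
    (A ⊗ₖ B) *ᵥ (fun kl : α × β => x kl.1 * y kl.2)
      = fun ij => (A *ᵥ x) ij.1 * (B *ᵥ y) ij.2 := by
  funext ⟨i, j⟩
  simp only [mulVec, dotProduct, kroneckerMap_apply]
  rw [Fintype.sum_prod_type, Finset.sum_mul_sum]
  congr 1; funext k; congr 1; funext l; ring

private def elimL (a b : Type*) : (a → ℝ) →ₗ[ℝ] (a ⊕ b → ℝ) where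
  toFun x := Sum.elim x 0
  map_add' x y := by funext k; cases k <;> simp
  map_smul' c x := by funext k; cases k <;> simp

private def elimR (a b : Type*) : (b → ℝ) →ₗ[ℝ] (a ⊕ b → ℝ) where
  toFun y := Sum.elim 0 y
  map_add' x y := by funext k; cases k <;> simp
  map_smul' c x := by funext k; cases k <;> simp

private lemma elimL_inj (a b : Type*) : Function.Injective (elimL a b) := by
  intro x y h; funext k; exact congrFun h (Sum.inl k)

private lemma elimR_inj (a b : Type*) : Function.Injective (elimR a b) := by
  intro x y h; funext k; exact congrFun h (Sum.inr k)

set_option maxHeartbeats 1000000 in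
private lemma kron_ker_bound {s r m : ℕ} (P : Matrix (Fin s) (Fin r) ℝ)
    (M : Matrix ((Fin s ⊕ Fin r) × Fin m) ((Fin s ⊕ Fin r) × Fin m) ℝ)
    (B₁ B₂ : Matrix (Fin m) (Fin m) ℝ)
    (h1 : ∀ (x : Fin s → ℝ) (v : Fin m → ℝ), Pᵀ *ᵥ x = 0 → B₁ *ᵥ v = 0 →
      M *ᵥ (fun kl => Sum.elim x 0 kl.1 * v kl.2) = 0)
    (h2 : ∀ (y : Fin r → ℝ) (v : Fin m → ℝ), P *ᵥ y = 0 → B₂ *ᵥ v = 0 →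
      M *ᵥ (fun kl => Sum.elim (0 : Fin s → ℝ) y kl.1 * v kl.2) = 0) :
    finrank ℝ (ker Pᵀ.mulVecLin) * finrank ℝ (ker B₁.mulVecLin)
      + finrank ℝ (ker P.mulVecLin) * finrank ℝ (ker B₂.mulVecLin)
      ≤ finrank ℝ (ker M.mulVecLin) := by
  classical
  set K₁ := ker Pᵀ.mulVecLin
  set K₂ := ker P.mulVecLin
  set L₁ := ker B₁.mulVecLin
  set L₂ := ker B₂.mulVecLin
  let b₁ := finBasis ℝ K₁
  let b₂ := finBasis ℝ K₂
  let c₁ := finBasis ℝ L₁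
  let c₂ := finBasis ℝ L₂
  let u₁ : Fin (finrank ℝ K₁) → (Fin s ⊕ Fin r → ℝ) := fun a => elimL (Fin s) (Fin r) (b₁ a : Fin s → ℝ)
  let u₂ : Fin (finrank ℝ K₂) → (Fin s ⊕ Fin r → ℝ) := fun a => elimR (Fin s) (Fin r) (b₂ a : Fin r → ℝ)
  have hu₁ : LinearIndependent ℝ u₁ := by
    have := (b₁.linearIndependent.map' K₁.subtype (Submodule.ker_subtype K₁)).map'
      (elimL (Fin s) (Fin r)) (LinearMap.ker_eq_bot.mpr (elimL_inj _ _))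
    exact this
  have hu₂ : LinearIndependent ℝ u₂ := by
    have := (b₂.linearIndependent.map' K₂.subtype (Submodule.ker_subtype K₂)).map'
      (elimR (Fin s) (Fin r)) (LinearMap.ker_eq_bot.mpr (elimR_inj _ _))
    exact this
  have hc₁ : LinearIndependent ℝ (fun j => (c₁ j : Fin m → ℝ)) :=
    c₁.linearIndependent.map' L₁.subtype (Submodule.ker_subtype L₁)
  have hc₂ : LinearIndependent ℝ (fun j => (c₂ j : Fin m → ℝ)) :=
    c₂.linearIndependent.map' L₂.subtype (Submodule.ker_subtype L₂)
  let F₁ : Fin (finrank ℝ K₁) × Fin (finrank ℝ L₁) → ((Fin s ⊕ Fin r) × Fin m → ℝ) :=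
    fun x kl => u₁ x.1 kl.1 * (c₁ x.2 : Fin m → ℝ) kl.2
  let F₂ : Fin (finrank ℝ K₂) × Fin (finrank ℝ L₂) → ((Fin s ⊕ Fin r) × Fin m → ℝ) :=
    fun x kl => u₂ x.1 kl.1 * (c₂ x.2 : Fin m → ℝ) kl.2
  have hF₁ : LinearIndependent ℝ F₁ := li_mul u₁ (fun j => (c₁ j : Fin m → ℝ)) hu₁ hc₁
  have hF₂ : LinearIndependent ℝ F₂ := li_mul u₂ (fun j => (c₂ j : Fin m → ℝ)) hu₂ hc₂
  set W₁ := Submodule.span ℝ (Set.range F₁)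
  set W₂ := Submodule.span ℝ (Set.range F₂)
  have hdim₁ : finrank ℝ W₁ = finrank ℝ K₁ * finrank ℝ L₁ := by
    rw [finrank_span_eq_card hF₁]; simp
  have hdim₂ : finrank ℝ W₂ = finrank ℝ K₂ * finrank ℝ L₂ := by
    rw [finrank_span_eq_card hF₂]; simp
  -- both spans are in the kernel of M
  have hW₁ : W₁ ≤ ker M.mulVecLin := by
    rw [Submodule.span_le]
    rintro _ ⟨⟨a, j⟩, rfl⟩
    rw [SetLike.mem_coe, mem_ker, mulVecLin_apply]
    exact h1 _ _ (LinearMap.mem_ker.mp (b₁ a).2) (LinearMap.mem_ker.mp (c₁ j).2)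
  have hW₂ : W₂ ≤ ker M.mulVecLin := by
    rw [Submodule.span_le]
    rintro _ ⟨⟨a, j⟩, rfl⟩
    rw [SetLike.mem_coe, mem_ker, mulVecLin_apply]
    exact h2 _ _ (LinearMap.mem_ker.mp (b₂ a).2) (LinearMap.mem_ker.mp (c₂ j).2)
  -- disjointness via support restriction maps
  let ρ₁ : (((Fin s ⊕ Fin r) × Fin m) → ℝ) →ₗ[ℝ] ((Fin r × Fin m) → ℝ) :=
    LinearMap.funLeft ℝ ℝ (fun bj => (Sum.inr bj.1, bj.2))
  let ρ₂ : (((Fin s ⊕ Fin r) × Fin m) → ℝ) →ₗ[ℝ] ((Fin s × Fin m) → ℝ) :=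
    LinearMap.funLeft ℝ ℝ (fun aj => (Sum.inl aj.1, aj.2))
  have hW₁ρ : W₁ ≤ ker ρ₁ := by
    rw [Submodule.span_le]
    rintro _ ⟨⟨a, j⟩, rfl⟩
    rw [SetLike.mem_coe, mem_ker]
    funext ⟨b, l⟩
    simp [ρ₁, LinearMap.funLeft, F₁, u₁, elimL]
  have hW₂ρ : W₂ ≤ ker ρ₂ := by
    rw [Submodule.span_le]
    rintro _ ⟨⟨a, j⟩, rfl⟩
    rw [SetLike.mem_coe, mem_ker]
    funext ⟨b, l⟩
    simp [ρ₂, LinearMap.funLeft, F₂, u₂, elimR]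
  have hdis : Disjoint W₁ W₂ := by
    refine Disjoint.mono hW₁ρ hW₂ρ ?_
    rw [Submodule.disjoint_def]
    intro f hf1 hf2
    funext ⟨k, l⟩
    cases k with
    | inl a => exact congrFun (mem_ker.mp hf2) (a, l)
    | inr b => exact congrFun (mem_ker.mp hf1) (b, l)
  have hsum := Submodule.finrank_sup_add_finrank_inf_eq W₁ W₂
  rw [disjoint_iff.mp hdis, finrank_bot] at hsum
  have hle : finrank ℝ ↥(W₁ ⊔ W₂) ≤ finrank ℝ (ker M.mulVecLin) :=
    Submodule.finrank_mono (sup_le hW₁ hW₂)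
  omega

private lemma blocks_mulVec {s r : ℕ} (P : Matrix (Fin s) (Fin r) ℝ)
    (z : Fin s ⊕ Fin r → ℝ) :
    Matrix.fromBlocks 0 P Pᵀ 0 *ᵥ z
      = Sum.elim (P *ᵥ (z ∘ Sum.inr)) (Pᵀ *ᵥ (z ∘ Sum.inl)) := by
  have hz : z = Sum.elim (z ∘ Sum.inl) (z ∘ Sum.inr) := by funext k; cases k <;> rfl
  nth_rewrite 1 [hz]
  rw [fromBlocks_mulVec]
  simp

private lemma ker_blocks {s r : ℕ} (P : Matrix (Fin s) (Fin r) ℝ) :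
    finrank ℝ (ker (Matrix.fromBlocks 0 P Pᵀ 0).mulVecLin)
      = finrank ℝ (ker Pᵀ.mulVecLin) + finrank ℝ (ker P.mulVecLin) := by
  have hmem : ∀ z : Fin s ⊕ Fin r → ℝ,
      z ∈ ker (Matrix.fromBlocks 0 P Pᵀ 0).mulVecLin ↔
        Pᵀ *ᵥ (z ∘ Sum.inl) = 0 ∧ P *ᵥ (z ∘ Sum.inr) = 0 := by
    intro z
    rw [mem_ker, mulVecLin_apply, blocks_mulVec]
    constructor
    · intro h
      constructor
      · funext i; exact congrFun h (Sum.inr i)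
      · funext i; exact congrFun h (Sum.inl i)
    · intro ⟨h1, h2⟩
      rw [h1, h2]
      funext k; cases k <;> rfl
  let e : (ker (Matrix.fromBlocks 0 P Pᵀ 0).mulVecLin) ≃ₗ[ℝ]
      (ker Pᵀ.mulVecLin × ker P.mulVecLin) :=
    { toFun := fun z => (⟨z.1 ∘ Sum.inl, mem_ker.mpr (((hmem z.1).mp z.2).1)⟩,
        ⟨z.1 ∘ Sum.inr, mem_ker.mpr (((hmem z.1).mp z.2).2)⟩)
      invFun := fun xy => ⟨Sum.elim xy.1.1 xy.2.1, (hmem _).mpr (by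
        constructor
        · rw [Sum.elim_comp_inl]; exact mem_ker.mp xy.1.2
        · rw [Sum.elim_comp_inr]; exact mem_ker.mp xy.2.2)⟩
      map_add' := fun x y => by ext <;> rfl
      map_smul' := fun c x => by ext <;> rfl
      left_inv := fun z => by
        apply Subtype.ext; funext k; cases k <;> rfl
      right_inv := fun xy => by
        refine Prod.ext (Subtype.ext ?_) (Subtype.ext ?_) <;> rfl }
  rw [e.finrank_eq, Module.finrank_prod]

private lemma ker_sq {m : ℕ} (A : Matrix (Fin m) (Fin m) ℝ) (mu : ℝ) (hmu : mu ≠ 0) :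
    finrank ℝ (ker (A ^ 2 - (mu ^ 2) • (1 : Matrix (Fin m) (Fin m) ℝ)).mulVecLin)
      = finrank ℝ (ker (A - mu • (1 : Matrix (Fin m) (Fin m) ℝ)).mulVecLin)
        + finrank ℝ (ker (A + mu • (1 : Matrix (Fin m) (Fin m) ℝ)).mulVecLin) := by
  set C := A - mu • (1 : Matrix (Fin m) (Fin m) ℝ) with hC
  set C' := A + mu • (1 : Matrix (Fin m) (Fin m) ℝ) with hC'
  have hcomm : Commute A (mu • (1 : Matrix (Fin m) (Fin m) ℝ)) :=
    (Commute.one_right A).smul_right mu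
  have hCC' : Commute C C' :=
    Commute.sub_left ((Commute.refl A).add_right hcomm)
      (Commute.add_right hcomm.symm (Commute.refl _))
  have hpow : (mu • (1 : Matrix (Fin m) (Fin m) ℝ)) ^ 2 = (mu ^ 2) • 1 := by
    rw [smul_pow, one_pow]
  have hfact : A ^ 2 - (mu ^ 2) • (1 : Matrix (Fin m) (Fin m) ℝ) = C' * C := by
    rw [← hpow, hcomm.sq_sub_sq]
  have hfact' : A ^ 2 - (mu ^ 2) • (1 : Matrix (Fin m) (Fin m) ℝ) = C * C' := by
    rw [hfact]; exact hCC'.eq.symm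
  have hdiff : C' - C = (2 * mu) • (1 : Matrix (Fin m) (Fin m) ℝ) := by
    rw [hC, hC']; module
  set B := A ^ 2 - (mu ^ 2) • (1 : Matrix (Fin m) (Fin m) ℝ) with hB
  have hCle : ker C.mulVecLin ≤ ker B.mulVecLin := by
    intro x hx
    rw [mem_ker, mulVecLin_apply] at hx ⊢
    rw [hfact, ← Matrix.mulVec_mulVec, hx, Matrix.mulVec_zero]
  have hC'le : ker C'.mulVecLin ≤ ker B.mulVecLin := by
    intro x hx
    rw [mem_ker, mulVecLin_apply] at hx ⊢
    rw [hfact', ← Matrix.mulVec_mulVec, hx, Matrix.mulVec_zero]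
  have h2mu : (2 * mu) ≠ 0 := by simp [hmu]
  have hsup : ker C.mulVecLin ⊔ ker C'.mulVecLin = ker B.mulVecLin := by
    refine le_antisymm (sup_le hCle hC'le) ?_
    intro x hx
    rw [mem_ker, mulVecLin_apply] at hx
    refine Submodule.mem_sup.mpr ⟨(2 * mu)⁻¹ • (C' *ᵥ x), ?_, -((2 * mu)⁻¹ • (C *ᵥ x)), ?_, ?_⟩
    · rw [mem_ker, mulVecLin_apply, Matrix.mulVec_smul, Matrix.mulVec_mulVec, ← hfact', hx,
        smul_zero]
    · rw [mem_ker, mulVecLin_apply, Matrix.mulVec_neg, Matrix.mulVec_smul,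
        Matrix.mulVec_mulVec, ← hfact, hx, smul_zero, neg_zero]
    · rw [← smul_neg, ← smul_add]
      have h9 : C' *ᵥ x + -(C *ᵥ x) = (C' - C) *ᵥ x := by
        rw [Matrix.sub_mulVec C' C x, ← sub_eq_add_neg]
      rw [h9, hdiff, Matrix.smul_mulVec, Matrix.one_mulVec, smul_smul,
        inv_mul_cancel₀ h2mu, one_smul]
  have hinf : ker C.mulVecLin ⊓ ker C'.mulVecLin = ⊥ := by
    rw [Submodule.eq_bot_iff]
    intro x hx
    obtain ⟨hx1, hx2⟩ := Submodule.mem_inf.mp hx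
    rw [mem_ker, mulVecLin_apply] at hx1 hx2
    have h8 : (C' - C) *ᵥ x = 0 := by rw [Matrix.sub_mulVec, hx1, hx2, sub_zero]
    rw [hdiff, Matrix.smul_mulVec, Matrix.one_mulVec, smul_eq_zero] at h8
    exact h8.resolve_left h2mu
  have := Submodule.finrank_sup_add_finrank_inf_eq (ker C.mulVecLin) (ker C'.mulVecLin)
  rw [hsup, hinf, finrank_bot] at this
  omega

/-- Suppose `0` is an eigenvalue of `A₁ = [[0,P],[Pᵀ,0]]` (parts of sizes `s` and `r = n − s`)
with multiplicity `p`, `μ ≠ 0` is such that `μ²` is an eigenvalue of `A₂²` with multiplicity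
`q`, and `μ` has multiplicity `t` as an eigenvalue of `A₂`.  Then `μ` and `−μ` are eigenvalues
of the signed Cartesian product `𝒜 = A₁ ⊗ I_m + D ⊗ A₂` with multiplicities at least
`(pq + (n − 2s)(q − 2t))/2` and `(pq − (n − 2s)(q − 2t))/2` respectively, and the same bounds
hold for the signed semi-strong product `𝒜' = (A₁ + D) ⊗ A₂`. -/
theorem eigenvalue_mu_of_signed_products (s r m : ℕ)
    (P : Matrix (Fin s) (Fin r) ℝ)
    (A₂ : Matrix (Fin m) (Fin m) ℝ) (hA₂symm : A₂.IsSymm)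
    (A₁ : Matrix (Fin s ⊕ Fin r) (Fin s ⊕ Fin r) ℝ)
    (hA₁ : A₁ = Matrix.fromBlocks 0 P Pᵀ 0)
    (D : Matrix (Fin s ⊕ Fin r) (Fin s ⊕ Fin r) ℝ)
    (hD : D = Matrix.fromBlocks 1 0 0 (-1))
    (𝒜 𝒜' : Matrix ((Fin s ⊕ Fin r) × Fin m) ((Fin s ⊕ Fin r) × Fin m) ℝ)
    (h𝒜 : 𝒜 = A₁ ⊗ₖ (1 : Matrix (Fin m) (Fin m) ℝ) + D ⊗ₖ A₂)
    (h𝒜' : 𝒜' = (A₁ + D) ⊗ₖ A₂)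
    (mu : ℝ) (hmu : mu ≠ 0) (p q t : ℕ) (hp0 : 0 < p) (hq0 : 0 < q)
    (hp : Module.finrank ℝ (LinearMap.ker A₁.mulVecLin) = p)
    (hq : Module.finrank ℝ (LinearMap.ker (A₂ ^ 2 - (mu ^ 2) •
      (1 : Matrix (Fin m) (Fin m) ℝ)).mulVecLin) = q)
    (ht : Module.finrank ℝ (LinearMap.ker (A₂ - mu •
      (1 : Matrix (Fin m) (Fin m) ℝ)).mulVecLin) = t) :
    ((p * q : ℤ) + (((s : ℤ) + r) - 2 * s) * ((q : ℤ) - 2 * t) ≤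
      2 * (Module.finrank ℝ (LinearMap.ker (𝒜 - mu •
        (1 : Matrix ((Fin s ⊕ Fin r) × Fin m) ((Fin s ⊕ Fin r) × Fin m) ℝ)).mulVecLin) : ℤ)) ∧
    ((p * q : ℤ) - (((s : ℤ) + r) - 2 * s) * ((q : ℤ) - 2 * t) ≤
      2 * (Module.finrank ℝ (LinearMap.ker (𝒜 + mu •
        (1 : Matrix ((Fin s ⊕ Fin r) × Fin m) ((Fin s ⊕ Fin r) × Fin m) ℝ)).mulVecLin) : ℤ)) ∧
    ((p * q : ℤ) + (((s : ℤ) + r) - 2 * s) * ((q : ℤ) - 2 * t) ≤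
      2 * (Module.finrank ℝ (LinearMap.ker (𝒜' - mu •
        (1 : Matrix ((Fin s ⊕ Fin r) × Fin m) ((Fin s ⊕ Fin r) × Fin m) ℝ)).mulVecLin) : ℤ)) ∧
    ((p * q : ℤ) - (((s : ℤ) + r) - 2 * s) * ((q : ℤ) - 2 * t) ≤
      2 * (Module.finrank ℝ (LinearMap.ker (𝒜' + mu •
        (1 : Matrix ((Fin s ⊕ Fin r) × Fin m) ((Fin s ⊕ Fin r) × Fin m) ℝ)).mulVecLin) : ℤ)) := by
  subst hA₁ hD h𝒜 h𝒜'
  set A₁ := Matrix.fromBlocks 0 P Pᵀ (0 : Matrix (Fin r) (Fin r) ℝ) with hA₁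
  set D := Matrix.fromBlocks (1 : Matrix (Fin s) (Fin s) ℝ) 0 0
    (-1 : Matrix (Fin r) (Fin r) ℝ) with hD
  set p₁ := finrank ℝ (ker Pᵀ.mulVecLin) with hp₁
  set p₂ := finrank ℝ (ker P.mulVecLin) with hp₂
  set t₁ := finrank ℝ (ker (A₂ - mu • (1 : Matrix (Fin m) (Fin m) ℝ)).mulVecLin) with ht₁
  set t₂ := finrank ℝ (ker (A₂ + mu • (1 : Matrix (Fin m) (Fin m) ℝ)).mulVecLin) with ht₂
  -- decompositions of p and q
  have hpp : p₁ + p₂ = p := by rw [← hp]; exact (ker_blocks P).symm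
  have hqq : t₁ + t₂ = q := by rw [← hq]; exact (ker_sq A₂ mu hmu).symm
  -- rank relations
  have hs1 : P.rank + p₁ = s := by
    have h1 := LinearMap.finrank_range_add_finrank_ker (Pᵀ.mulVecLin)
    rw [Module.finrank_fin_fun] at h1
    rw [← Matrix.rank_transpose P]
    exact h1
  have hs2 : P.rank + p₂ = r := by
    have h1 := LinearMap.finrank_range_add_finrank_ker (P.mulVecLin)
    rw [Module.finrank_fin_fun] at h1
    exact h1
  -- eigenvector facts
  have hv₁ : ∀ v : Fin m → ℝ, (A₂ - mu • (1 : Matrix (Fin m) (Fin m) ℝ)) *ᵥ v = 0 →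
      A₂ *ᵥ v = mu • v := by
    intro v hv
    rwa [Matrix.sub_mulVec, sub_eq_zero, Matrix.smul_mulVec, Matrix.one_mulVec] at hv
  have hv₂ : ∀ v : Fin m → ℝ, (A₂ + mu • (1 : Matrix (Fin m) (Fin m) ℝ)) *ᵥ v = 0 →
      A₂ *ᵥ v = -(mu • v) := by
    intro v hv
    rwa [Matrix.add_mulVec, add_eq_zero_iff_eq_neg, Matrix.smul_mulVec,
      Matrix.one_mulVec] at hv
  -- block vector computations
  have hA1x : ∀ x : Fin s → ℝ, Pᵀ *ᵥ x = 0 → A₁ *ᵥ Sum.elim x 0 = 0 := by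
    intro x hx
    rw [hA₁, blocks_mulVec]
    funext k
    cases k <;> simp [hx]
  have hA1y : ∀ y : Fin r → ℝ, P *ᵥ y = 0 → A₁ *ᵥ Sum.elim 0 y = 0 := by
    intro y hy
    rw [hA₁, blocks_mulVec]
    funext k
    cases k <;> simp [hy]
  have hDx : ∀ x : Fin s → ℝ, D *ᵥ Sum.elim x 0 = Sum.elim x 0 := by
    intro x
    rw [hD, fromBlocks_mulVec]
    funext k
    cases k <;> simp
  have hDy : ∀ y : Fin r → ℝ, D *ᵥ Sum.elim 0 y = -(Sum.elim (0 : Fin s → ℝ) y) := by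
    intro y
    rw [hD, fromBlocks_mulVec]
    funext k
    cases k <;> simp [Matrix.neg_mulVec]
  have hADx : ∀ x : Fin s → ℝ, Pᵀ *ᵥ x = 0 → (A₁ + D) *ᵥ Sum.elim x 0 = Sum.elim x 0 := by
    intro x hx
    rw [Matrix.add_mulVec, hA1x x hx, hDx, zero_add]
  have hADy : ∀ y : Fin r → ℝ, P *ᵥ y = 0 →
      (A₁ + D) *ᵥ Sum.elim 0 y = -(Sum.elim (0 : Fin s → ℝ) y) := by
    intro y hy
    rw [Matrix.add_mulVec, hA1y y hy, hDy, zero_add]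
  -- the four bounds
  have b1 : p₁ * t₁ + p₂ * t₂ ≤ finrank ℝ (ker ((A₁ ⊗ₖ (1 : Matrix (Fin m) (Fin m) ℝ)
      + D ⊗ₖ A₂) - mu •
      (1 : Matrix ((Fin s ⊕ Fin r) × Fin m) ((Fin s ⊕ Fin r) × Fin m) ℝ)).mulVecLin) := by
    apply kron_ker_bound P _ (A₂ - mu • 1) (A₂ + mu • 1)
    · intro x v hx hv
      rw [Matrix.sub_mulVec, Matrix.add_mulVec, pure_mulVec, pure_mulVec,
        Matrix.smul_mulVec, Matrix.one_mulVec, hA1x x hx, hDx, hv₁ v hv,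
        Matrix.one_mulVec]
      funext ⟨k, j⟩
      simp
      ring
    · intro y v hy hv
      rw [Matrix.sub_mulVec, Matrix.add_mulVec, pure_mulVec, pure_mulVec,
        Matrix.smul_mulVec, Matrix.one_mulVec, hA1y y hy, hDy, hv₂ v hv,
        Matrix.one_mulVec]
      funext ⟨k, j⟩
      simp
      ring
  have b2 : p₁ * t₂ + p₂ * t₁ ≤ finrank ℝ (ker ((A₁ ⊗ₖ (1 : Matrix (Fin m) (Fin m) ℝ)
      + D ⊗ₖ A₂) + mu •
      (1 : Matrix ((Fin s ⊕ Fin r) × Fin m) ((Fin s ⊕ Fin r) × Fin m) ℝ)).mulVecLin) := by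
    apply kron_ker_bound P _ (A₂ + mu • 1) (A₂ - mu • 1)
    · intro x v hx hv
      rw [Matrix.add_mulVec, Matrix.add_mulVec, pure_mulVec, pure_mulVec,
        Matrix.smul_mulVec, Matrix.one_mulVec, hA1x x hx, hDx, hv₂ v hv,
        Matrix.one_mulVec]
      funext ⟨k, j⟩
      simp
      ring
    · intro y v hy hv
      rw [Matrix.add_mulVec, Matrix.add_mulVec, pure_mulVec, pure_mulVec,
        Matrix.smul_mulVec, Matrix.one_mulVec, hA1y y hy, hDy, hv₁ v hv,
        Matrix.one_mulVec]
      funext ⟨k, j⟩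
      simp
      ring
  have b3 : p₁ * t₁ + p₂ * t₂ ≤ finrank ℝ (ker (((A₁ + D) ⊗ₖ A₂) - mu •
      (1 : Matrix ((Fin s ⊕ Fin r) × Fin m) ((Fin s ⊕ Fin r) × Fin m) ℝ)).mulVecLin) := by
    apply kron_ker_bound P _ (A₂ - mu • 1) (A₂ + mu • 1)
    · intro x v hx hv
      rw [Matrix.sub_mulVec, pure_mulVec, Matrix.smul_mulVec, Matrix.one_mulVec,
        hADx x hx, hv₁ v hv]
      funext ⟨k, j⟩
      simp
      ring
    · intro y v hy hv
      rw [Matrix.sub_mulVec, pure_mulVec, Matrix.smul_mulVec, Matrix.one_mulVec,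
        hADy y hy, hv₂ v hv]
      funext ⟨k, j⟩
      simp
      ring
  have b4 : p₁ * t₂ + p₂ * t₁ ≤ finrank ℝ (ker (((A₁ + D) ⊗ₖ A₂) + mu •
      (1 : Matrix ((Fin s ⊕ Fin r) × Fin m) ((Fin s ⊕ Fin r) × Fin m) ℝ)).mulVecLin) := by
    apply kron_ker_bound P _ (A₂ + mu • 1) (A₂ - mu • 1)
    · intro x v hx hv
      rw [Matrix.add_mulVec, pure_mulVec, Matrix.smul_mulVec, Matrix.one_mulVec,
        hADx x hx, hv₂ v hv]
      funext ⟨k, j⟩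
      simp
      ring
    · intro y v hy hv
      rw [Matrix.add_mulVec, pure_mulVec, Matrix.smul_mulVec, Matrix.one_mulVec,
        hADy y hy, hv₁ v hv]
      funext ⟨k, j⟩
      simp
      ring
  -- arithmetic
  have zp : (p : ℤ) = p₁ + p₂ := by exact_mod_cast hpp.symm
  have zq : (q : ℤ) = t₁ + t₂ := by exact_mod_cast hqq.symm
  have zt : (t : ℤ) = t₁ := by exact_mod_cast ht.symm
  have zs : (s : ℤ) = P.rank + p₁ := by exact_mod_cast hs1.symm
  have zr : (r : ℤ) = P.rank + p₂ := by exact_mod_cast hs2.symm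
  have key1 : (p * q : ℤ) + (((s : ℤ) + r) - 2 * s) * ((q : ℤ) - 2 * t)
      = 2 * ((p₁ : ℤ) * t₁ + p₂ * t₂) := by rw [zp, zq, zs, zr, zt]; push_cast; ring
  have key2 : (p * q : ℤ) - (((s : ℤ) + r) - 2 * s) * ((q : ℤ) - 2 * t)
      = 2 * ((p₁ : ℤ) * t₂ + p₂ * t₁) := by rw [zp, zq, zs, zr, zt]; push_cast; ring
  have c1 : ((p₁ * t₁ + p₂ * t₂ : ℕ) : ℤ) ≤
      (finrank ℝ (ker ((A₁ ⊗ₖ (1 : Matrix (Fin m) (Fin m) ℝ) + D ⊗ₖ A₂) - mu •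
      (1 : Matrix ((Fin s ⊕ Fin r) × Fin m) ((Fin s ⊕ Fin r) × Fin m) ℝ)).mulVecLin) : ℤ) :=
    Nat.cast_le.mpr b1
  have c2 : ((p₁ * t₂ + p₂ * t₁ : ℕ) : ℤ) ≤
      (finrank ℝ (ker ((A₁ ⊗ₖ (1 : Matrix (Fin m) (Fin m) ℝ) + D ⊗ₖ A₂) + mu •
      (1 : Matrix ((Fin s ⊕ Fin r) × Fin m) ((Fin s ⊕ Fin r) × Fin m) ℝ)).mulVecLin) : ℤ) :=
    Nat.cast_le.mpr b2
  have c3 : ((p₁ * t₁ + p₂ * t₂ : ℕ) : ℤ) ≤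
      (finrank ℝ (ker (((A₁ + D) ⊗ₖ A₂) - mu •
      (1 : Matrix ((Fin s ⊕ Fin r) × Fin m) ((Fin s ⊕ Fin r) × Fin m) ℝ)).mulVecLin) : ℤ) :=
    Nat.cast_le.mpr b3
  have c4 : ((p₁ * t₂ + p₂ * t₁ : ℕ) : ℤ) ≤
      (finrank ℝ (ker (((A₁ + D) ⊗ₖ A₂) + mu •
      (1 : Matrix ((Fin s ⊕ Fin r) × Fin m) ((Fin s ⊕ Fin r) × Fin m) ℝ)).mulVecLin) : ℤ) :=
    Nat.cast_le.mpr b4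
  push_cast at c1 c2 c3 c4
  exact ⟨by linarith, by linarith, by linarith, by linarith⟩
end

section
/- Let A₁ be an n×n real symmetric matrix of block form [[0_s, P],[Pᵀ, 0_{n−s}]], let A₂ be an m×m real symmetric matrix, let D = diag(I_s, −I_{n−s}), and set 𝒜' = (A₁+D)⊗A₂. Let λ ≠ 0 and μ ≠ 0 be real numbers such that λ² is an eigenvalue of A₁² with multiplicity p and μ² is an eigenvalue of A₂² with multiplicity q. Then √((λ² + 1)·μ²) and −√((λ² + 1)·μ²) are eigenvalues of 𝒜', each with multiplicity at least p·q/2; that is, dim ker(𝒜' − √((λ²+1)μ²)·I_{mn}) ≥ p·q/2 and dim ker(𝒜' + √((λ²+1)μ²)·I_{mn}) ≥ p·q/2. -/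
open Matrix Kronecker

private lemma kron_mulVec_prod {α β γ δ : Type*} [Fintype β] [Fintype δ]
    (A : Matrix α β ℝ) (B : Matrix γ δ ℝ) (x : β → ℝ) (y : δ → ℝ) :
    (A ⊗ₖ B).mulVec (fun p => x p.1 * y p.2) =
      fun p => A.mulVec x p.1 * B.mulVec y p.2 := by
  funext pr
  obtain ⟨i, j⟩ := pr
  simp only [Matrix.mulVec, dotProduct, Matrix.kroneckerMap_apply]
  rw [Fintype.sum_prod_type, Fintype.sum_mul_sum]
  exact Finset.sum_congr rfl fun k _ => Finset.sum_congr rfl fun l _ => by ring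

private lemma linearIndependent_mul_prod {ι κ α β : Type*} [Fintype ι] [Fintype κ]
    [Fintype α] [Fintype β]
    {x : ι → α → ℝ} {y : κ → β → ℝ} (hx : LinearIndependent ℝ x)
    (hy : LinearIndependent ℝ y) :
    LinearIndependent ℝ (fun ab : ι × κ => (fun pr : α × β => x ab.1 pr.1 * y ab.2 pr.2)) := by
  rw [Fintype.linearIndependent_iff] at hx hy ⊢
  intro g hg ab
  have key : ∀ b : κ, ∀ i : α, ∑ a, g (a, b) * x a i = 0 := by
    intro b i
    refine hy (fun b => ∑ a, g (a, b) * x a i) ?_ b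
    funext j
    have h := congrFun hg (i, j)
    simp only [Finset.sum_apply, Pi.smul_apply, smul_eq_mul, Pi.zero_apply] at h ⊢
    rw [Fintype.sum_prod_type, Finset.sum_comm] at h
    rw [← h]
    refine Finset.sum_congr rfl fun b _ => ?_
    rw [Finset.sum_mul]
    exact Finset.sum_congr rfl fun a _ => by ring
  refine hx (fun a => g (a, ab.2)) ?_ ab.1
  funext i
  simpa only [Finset.sum_apply, Pi.smul_apply, smul_eq_mul, Pi.zero_apply] using key ab.2 i

set_option maxHeartbeats 1600000 in
/-- If `λ ≠ 0` and `λ²` is an eigenvalue of `A₁²` with multiplicity `p`, where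
`A₁ = [[0,P],[Pᵀ,0]]`, and `μ²` is an eigenvalue of the symmetric matrix `A₂²` with
multiplicity `q`, with `μ ≠ 0`, then `√((λ² + 1)·μ²)` and `−√((λ² + 1)·μ²)` are eigenvalues of
the signed semi-strong product `𝒜' = (A₁ + D) ⊗ A₂`, each with multiplicity at least `p·q/2`. -/
theorem eigenvalue_pm_sqrt_of_signed_semi_strong_product (s t m : ℕ)
    (P : Matrix (Fin s) (Fin t) ℝ)
    (A₂ : Matrix (Fin m) (Fin m) ℝ) (hA₂symm : A₂.IsSymm)
    (A₁ : Matrix (Fin s ⊕ Fin t) (Fin s ⊕ Fin t) ℝ)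
    (hA₁ : A₁ = Matrix.fromBlocks 0 P Pᵀ 0)
    (D : Matrix (Fin s ⊕ Fin t) (Fin s ⊕ Fin t) ℝ)
    (hD : D = Matrix.fromBlocks 1 0 0 (-1))
    (𝒜' : Matrix ((Fin s ⊕ Fin t) × Fin m) ((Fin s ⊕ Fin t) × Fin m) ℝ)
    (h𝒜' : 𝒜' = (A₁ + D) ⊗ₖ A₂)
    (lam mu : ℝ) (hlam : lam ≠ 0) (hmu : mu ≠ 0) (p q : ℕ) (hp0 : 0 < p) (hq0 : 0 < q)
    (hp : Module.finrank ℝ (LinearMap.ker (A₁ ^ 2 - (lam ^ 2) •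
      (1 : Matrix (Fin s ⊕ Fin t) (Fin s ⊕ Fin t) ℝ)).mulVecLin) = p)
    (hq : Module.finrank ℝ (LinearMap.ker (A₂ ^ 2 - (mu ^ 2) •
      (1 : Matrix (Fin m) (Fin m) ℝ)).mulVecLin) = q) :
    p * q ≤ 2 * Module.finrank ℝ (LinearMap.ker (𝒜' - Real.sqrt ((lam ^ 2 + 1) * mu ^ 2) •
      (1 : Matrix ((Fin s ⊕ Fin t) × Fin m) ((Fin s ⊕ Fin t) × Fin m) ℝ)).mulVecLin) ∧
    p * q ≤ 2 * Module.finrank ℝ (LinearMap.ker (𝒜' + Real.sqrt ((lam ^ 2 + 1) * mu ^ 2) •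
      (1 : Matrix ((Fin s ⊕ Fin t) × Fin m) ((Fin s ⊕ Fin t) × Fin m) ℝ)).mulVecLin) := by
  classical
  set c : ℝ := Real.sqrt ((lam ^ 2 + 1) * mu ^ 2) with hc
  have hc2pos : (0:ℝ) < (lam ^ 2 + 1) * mu ^ 2 := by positivity
  have hcpos : 0 < c := Real.sqrt_pos.mpr hc2pos
  have hcsq : c ^ 2 = (lam ^ 2 + 1) * mu ^ 2 := Real.sq_sqrt hc2pos.le
  -- block identities
  have hDA : D * A₁ = -(A₁ * D) := by
    subst hA₁ hD
    rw [Matrix.fromBlocks_multiply, Matrix.fromBlocks_multiply, Matrix.fromBlocks_neg]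
    congr 1 <;> simp
  have hDD : D * D = 1 := by
    subst hD
    rw [Matrix.fromBlocks_multiply, ← Matrix.fromBlocks_one]
    congr 1 <;> simp
  set B := A₁ + D with hB
  set K := A₁ * D with hK
  have e1 : D * (A₁ * D) = -A₁ := by
    rw [← mul_assoc, hDA, neg_mul, mul_assoc, hDD, mul_one]
  have hBB : B * B = A₁ * A₁ + 1 := by
    rw [hB, add_mul, mul_add, mul_add, hDA, hDD]
    abel
  have hBK : B * K + K * B = 0 := by
    have e2 : (A₁ * D) * A₁ = -(A₁ * (A₁ * D)) := by
      rw [mul_assoc, hDA, mul_neg]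
    have e3 : (A₁ * D) * D = A₁ := by rw [mul_assoc, hDD, mul_one]
    rw [hB, hK, add_mul, mul_add, e1, e2, e3]
    abel
  have hKK : K * K = -(A₁ * A₁) := by
    rw [hK, mul_assoc, e1, mul_neg]
  have hDA2 : D * (A₁ * A₁) = (A₁ * A₁) * D := by
    rw [← mul_assoc, hDA, neg_mul, mul_assoc, hDA, mul_neg, neg_neg, ← mul_assoc]
  have hBA2 : B * (A₁ * A₁) = (A₁ * A₁) * B := by
    rw [hB, add_mul, mul_add, hDA2, ← mul_assoc, mul_assoc]
  have hKA2 : K * (A₁ * A₁) = (A₁ * A₁) * K := by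
    rw [hK, mul_assoc, hDA2, ← mul_assoc, ← mul_assoc, ← mul_assoc]
  -- the two "shifted" matrices
  set X₁ : Matrix (Fin s ⊕ Fin t) (Fin s ⊕ Fin t) ℝ := A₁ * A₁ - lam ^ 2 • 1 with hX₁
  set X₂ : Matrix (Fin m) (Fin m) ℝ := A₂ * A₂ - mu ^ 2 • 1 with hX₂
  have hBX₁ : B * X₁ = X₁ * B := by
    rw [hX₁, mul_sub, sub_mul, hBA2, Matrix.mul_smul, Matrix.smul_mul, mul_one, one_mul]
  have hKX₁ : K * X₁ = X₁ * K := by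
    rw [hX₁, mul_sub, sub_mul, hKA2, Matrix.mul_smul, Matrix.smul_mul, mul_one, one_mul]
  have hAX₂ : A₂ * X₂ = X₂ * A₂ := by
    rw [hX₂, mul_sub, sub_mul, mul_assoc, Matrix.mul_smul, Matrix.smul_mul, mul_one, one_mul]
  -- big matrices
  set N : Matrix ((Fin s ⊕ Fin t) × Fin m) ((Fin s ⊕ Fin t) × Fin m) ℝ := K ⊗ₖ A₂ with hN
  set L₁ : Matrix ((Fin s ⊕ Fin t) × Fin m) ((Fin s ⊕ Fin t) × Fin m) ℝ :=
    X₁ ⊗ₖ (1 : Matrix (Fin m) (Fin m) ℝ) with hL₁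
  set L₂ : Matrix ((Fin s ⊕ Fin t) × Fin m) ((Fin s ⊕ Fin t) × Fin m) ℝ :=
    (1 : Matrix (Fin s ⊕ Fin t) (Fin s ⊕ Fin t) ℝ) ⊗ₖ X₂ with hL₂
  have I1 : 𝒜' * L₁ = L₁ * 𝒜' := by
    rw [h𝒜', hL₁, ← Matrix.mul_kronecker_mul, ← Matrix.mul_kronecker_mul, hBX₁,
      mul_one, one_mul]
  have I2 : 𝒜' * L₂ = L₂ * 𝒜' := by
    rw [h𝒜', hL₂, ← Matrix.mul_kronecker_mul, ← Matrix.mul_kronecker_mul, hAX₂,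
      mul_one, one_mul]
  have I3 : N * L₁ = L₁ * N := by
    rw [hN, hL₁, ← Matrix.mul_kronecker_mul, ← Matrix.mul_kronecker_mul, hKX₁, mul_one, one_mul]
  have I4 : N * L₂ = L₂ * N := by
    rw [hN, hL₂, ← Matrix.mul_kronecker_mul, ← Matrix.mul_kronecker_mul, hAX₂, mul_one, one_mul]
  have I5 : 𝒜' * N + N * 𝒜' = 0 := by
    rw [h𝒜', hN, ← Matrix.mul_kronecker_mul, ← Matrix.mul_kronecker_mul,
      ← Matrix.add_kronecker, hBK, Matrix.zero_kronecker]
  have I6 : 𝒜' * 𝒜' = ((1 : Matrix (Fin s ⊕ Fin t) (Fin s ⊕ Fin t) ℝ) ⊗ₖ (A₂ * A₂)) * L₁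
      + (lam ^ 2 + 1) • L₂ + ((lam ^ 2 + 1) * mu ^ 2) • 1 := by
    rw [h𝒜', hL₁, hL₂, ← Matrix.mul_kronecker_mul, ← Matrix.mul_kronecker_mul, hBB,
      one_mul, mul_one,
      ← Matrix.one_kronecker_one (α := ℝ) (m := Fin s ⊕ Fin t) (n := Fin m)]
    ext ij kl
    simp only [Matrix.kroneckerMap_apply, Matrix.add_apply, Matrix.sub_apply,
      Matrix.smul_apply, smul_eq_mul, hX₁, hX₂]
    ring
  have I7 : N * N = -((((1 : Matrix (Fin s ⊕ Fin t) (Fin s ⊕ Fin t) ℝ)) ⊗ₖ (A₂ * A₂)) * L₁)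
      - lam ^ 2 • L₂ - (lam ^ 2 * mu ^ 2) • 1 := by
    rw [hN, hL₁, hL₂, ← Matrix.mul_kronecker_mul, ← Matrix.mul_kronecker_mul, hKK,
      one_mul, mul_one,
      ← Matrix.one_kronecker_one (α := ℝ) (m := Fin s ⊕ Fin t) (n := Fin m)]
    ext ij kl
    simp only [Matrix.kroneckerMap_apply, Matrix.add_apply, Matrix.sub_apply, Matrix.neg_apply,
      Matrix.smul_apply, smul_eq_mul, hX₁, hX₂]
    ring
  -- submodules
  set U : Submodule ℝ ((Fin s ⊕ Fin t) × Fin m → ℝ) :=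
    LinearMap.ker L₁.mulVecLin ⊓ LinearMap.ker L₂.mulVecLin with hU
  have memU : ∀ z : (Fin s ⊕ Fin t) × Fin m → ℝ,
      z ∈ U ↔ L₁.mulVec z = 0 ∧ L₂.mulVec z = 0 := by
    intro z
    simp [hU, LinearMap.mem_ker, Matrix.mulVecLin_apply, Submodule.mem_inf]
  -- key vector identities on U
  have hM2 : ∀ z ∈ U, 𝒜'.mulVec (𝒜'.mulVec z) = ((lam ^ 2 + 1) * mu ^ 2) • z := by
    intro z hz
    obtain ⟨hz1, hz2⟩ := (memU z).mp hz
    rw [Matrix.mulVec_mulVec, I6, Matrix.add_mulVec, Matrix.add_mulVec,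
      Matrix.smul_mulVec, Matrix.smul_mulVec, ← Matrix.mulVec_mulVec, hz1, hz2,
      Matrix.mulVec_zero, Matrix.one_mulVec, smul_zero]
    simp
  have hN2 : ∀ z ∈ U, N.mulVec (N.mulVec z) = -((lam ^ 2 * mu ^ 2) • z) := by
    intro z hz
    obtain ⟨hz1, hz2⟩ := (memU z).mp hz
    rw [Matrix.mulVec_mulVec, I7, Matrix.sub_mulVec, Matrix.sub_mulVec, Matrix.neg_mulVec,
      Matrix.smul_mulVec, Matrix.smul_mulVec, ← Matrix.mulVec_mulVec, hz1, hz2,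
      Matrix.mulVec_zero, Matrix.one_mulVec, smul_zero]
    simp
  have hMU : ∀ z ∈ U, 𝒜'.mulVec z ∈ U := by
    intro z hz
    obtain ⟨hz1, hz2⟩ := (memU z).mp hz
    refine (memU _).mpr ⟨?_, ?_⟩
    · rw [Matrix.mulVec_mulVec, ← I1, ← Matrix.mulVec_mulVec, hz1, Matrix.mulVec_zero]
    · rw [Matrix.mulVec_mulVec, ← I2, ← Matrix.mulVec_mulVec, hz2, Matrix.mulVec_zero]
  have hNU : ∀ z ∈ U, N.mulVec z ∈ U := by
    intro z hz
    obtain ⟨hz1, hz2⟩ := (memU z).mp hz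
    refine (memU _).mpr ⟨?_, ?_⟩
    · rw [Matrix.mulVec_mulVec, ← I3, ← Matrix.mulVec_mulVec, hz1, Matrix.mulVec_zero]
    · rw [Matrix.mulVec_mulVec, ← I4, ← Matrix.mulVec_mulVec, hz2, Matrix.mulVec_zero]
  have hMN : ∀ z : (Fin s ⊕ Fin t) × Fin m → ℝ,
      𝒜'.mulVec (N.mulVec z) = -(N.mulVec (𝒜'.mulVec z)) := by
    intro z
    have h5 := congrArg (fun M => M.mulVec z) I5
    simp only [Matrix.add_mulVec, Matrix.zero_mulVec] at h5
    rw [Matrix.mulVec_mulVec, Matrix.mulVec_mulVec]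
    exact eq_neg_of_add_eq_zero_left h5
  -- Step A : p * q ≤ finrank U
  have hA1pow : A₁ ^ 2 - lam ^ 2 • 1 = X₁ := by rw [pow_two, hX₁]
  have hA2pow : A₂ ^ 2 - mu ^ 2 • 1 = X₂ := by rw [pow_two, hX₂]
  rw [hA1pow] at hp
  rw [hA2pow] at hq
  have hUdim : p * q ≤ Module.finrank ℝ U := by
    let b₁ := Module.finBasisOfFinrankEq ℝ (LinearMap.ker X₁.mulVecLin) hp
    let b₂ := Module.finBasisOfFinrankEq ℝ (LinearMap.ker X₂.mulVecLin) hq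
    let x : Fin p → ((Fin s ⊕ Fin t) → ℝ) := fun a => (b₁ a : (Fin s ⊕ Fin t) → ℝ)
    let y : Fin q → (Fin m → ℝ) := fun b => (b₂ b : Fin m → ℝ)
    have hxli : LinearIndependent ℝ x :=
      b₁.linearIndependent.map' (Submodule.subtype _) (Submodule.ker_subtype _)
    have hyli : LinearIndependent ℝ y :=
      b₂.linearIndependent.map' (Submodule.subtype _) (Submodule.ker_subtype _)
    have hx0 : ∀ a, X₁.mulVec (x a) = 0 := fun a => by
      have h := LinearMap.mem_ker.mp (b₁ a).2
      rwa [Matrix.mulVecLin_apply] at h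
    have hy0 : ∀ b, X₂.mulVec (y b) = 0 := fun b => by
      have h := LinearMap.mem_ker.mp (b₂ b).2
      rwa [Matrix.mulVecLin_apply] at h
    let u : Fin p × Fin q → ((Fin s ⊕ Fin t) × Fin m → ℝ) :=
      fun ab => fun pr => x ab.1 pr.1 * y ab.2 pr.2
    have huU : ∀ ab, u ab ∈ U := by
      intro ab
      refine (memU _).mpr ⟨?_, ?_⟩
      · rw [hL₁, kron_mulVec_prod, hx0]
        funext pr
        simp
      · rw [hL₂, kron_mulVec_prod, hy0]
        funext pr
        simp
    have huli : LinearIndependent ℝ u := linearIndependent_mul_prod hxli hyli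
    let u' : Fin p × Fin q → U := fun ab => ⟨u ab, huU ab⟩
    have hu'li : LinearIndependent ℝ u' := by
      apply LinearIndependent.of_comp U.subtype
      exact huli
    simpa [Fintype.card_prod] using hu'li.fintype_card_le_finrank
  -- the two eigenspace pieces
  set Kp := LinearMap.ker ((𝒜' - c • 1).mulVecLin) ⊓ U with hKp
  set Km := LinearMap.ker ((𝒜' + c • 1).mulVecLin) ⊓ U with hKm
  have memKp : ∀ z : (Fin s ⊕ Fin t) × Fin m → ℝ,
      z ∈ Kp ↔ (𝒜'.mulVec z = c • z ∧ z ∈ U) := by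
    intro z
    rw [hKp, Submodule.mem_inf, LinearMap.mem_ker, Matrix.mulVecLin_apply, Matrix.sub_mulVec,
      Matrix.smul_mulVec, Matrix.one_mulVec, sub_eq_zero]
  have memKm : ∀ z : (Fin s ⊕ Fin t) × Fin m → ℝ,
      z ∈ Km ↔ (𝒜'.mulVec z = -(c • z) ∧ z ∈ U) := by
    intro z
    rw [hKm, Submodule.mem_inf, LinearMap.mem_ker, Matrix.mulVecLin_apply, Matrix.add_mulVec,
      Matrix.smul_mulVec, Matrix.one_mulVec, add_eq_zero_iff_eq_neg]
  -- Step B : finrank U ≤ finrank Kp + finrank Km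
  have hBsum : Module.finrank ℝ U ≤ Module.finrank ℝ Kp + Module.finrank ℝ Km := by
    have hcc : c * c = (lam ^ 2 + 1) * mu ^ 2 := by rw [← pow_two]; exact hcsq
    have hmemp : ∀ z : U, 𝒜'.mulVec (z : _) + c • (z : (Fin s ⊕ Fin t) × Fin m → ℝ) ∈ Kp := by
      intro z
      refine (memKp _).mpr ⟨?_, U.add_mem (hMU _ z.2) (U.smul_mem c z.2)⟩
      rw [Matrix.mulVec_add, hM2 _ z.2, Matrix.mulVec_smul]
      funext pr
      simp only [Pi.add_apply, Pi.smul_apply, smul_eq_mul]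
      rw [← hcc]
      ring
    have hmemm : ∀ z : U, c • (z : (Fin s ⊕ Fin t) × Fin m → ℝ) - 𝒜'.mulVec (z : _) ∈ Km := by
      intro z
      refine (memKm _).mpr ⟨?_, U.sub_mem (U.smul_mem c z.2) (hMU _ z.2)⟩
      rw [Matrix.mulVec_sub, hM2 _ z.2, Matrix.mulVec_smul]
      funext pr
      simp only [Pi.sub_apply, Pi.neg_apply, Pi.smul_apply, smul_eq_mul]
      rw [← hcc]
      ring
    let Φp : U →ₗ[ℝ] Kp :=
      LinearMap.codRestrict Kp ((𝒜' + c • 1).mulVecLin ∘ₗ U.subtype) (fun z => by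
        simpa only [LinearMap.comp_apply, Matrix.mulVecLin_apply, Submodule.subtype_apply,
          Matrix.add_mulVec, Matrix.smul_mulVec, Matrix.one_mulVec] using hmemp z)
    let Φm : U →ₗ[ℝ] Km :=
      LinearMap.codRestrict Km ((c • 1 - 𝒜').mulVecLin ∘ₗ U.subtype) (fun z => by
        simpa only [LinearMap.comp_apply, Matrix.mulVecLin_apply, Submodule.subtype_apply,
          Matrix.sub_mulVec, Matrix.smul_mulVec, Matrix.one_mulVec] using hmemm z)
    have hinj : Function.Injective (Φp.prod Φm) := by
      rw [← LinearMap.ker_eq_bot, LinearMap.ker_eq_bot']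
      intro z hz
      rw [LinearMap.prod_apply, Prod.mk.injEq] at hz
      obtain ⟨hz1, hz2⟩ := hz
      have h1 : (𝒜' + c • 1).mulVec (z : _) = 0 := congrArg Subtype.val hz1
      have h2 : (c • 1 - 𝒜').mulVec (z : _) = 0 := congrArg Subtype.val hz2
      have h3 : ((2 * c) • (z : (Fin s ⊕ Fin t) × Fin m → ℝ)) = 0 := by
        have := congrArg₂ (· + ·) h1 h2
        simp only [add_zero] at this
        rw [← this, Matrix.add_mulVec, Matrix.sub_mulVec]
        funext pr
        simp only [Pi.add_apply, Pi.sub_apply, Pi.smul_apply, smul_eq_mul,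
          Matrix.smul_mulVec, Matrix.one_mulVec]
        ring
      have h4 : (z : (Fin s ⊕ Fin t) × Fin m → ℝ) = 0 := by
        have h2c : (2 * c) ≠ 0 := by positivity
        rcases smul_eq_zero.mp h3 with h | h
        · exact absurd h h2c
        · exact h
      exact Subtype.ext h4
    calc Module.finrank ℝ U ≤ Module.finrank ℝ (Kp × Km) :=
          LinearMap.finrank_le_finrank_of_injective hinj
      _ = Module.finrank ℝ Kp + Module.finrank ℝ Km := Module.finrank_prod
  -- Step C : finrank Kp = finrank Km
  have hstepC : ∀ (W W' : Submodule ℝ ((Fin s ⊕ Fin t) × Fin m → ℝ)),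
      (∀ z ∈ W, N.mulVec z ∈ W') → (∀ z ∈ W, z ∈ U) →
      Module.finrank ℝ W ≤ Module.finrank ℝ W' := by
    intro W W' hmap hWU
    have hmem : ∀ z : W, N.mulVecLin ((W.subtype) z) ∈ W' := fun z => hmap _ z.2
    let Ψ : W →ₗ[ℝ] W' := LinearMap.codRestrict W' (N.mulVecLin ∘ₗ W.subtype) hmem
    have hinj : Function.Injective Ψ := by
      rw [← LinearMap.ker_eq_bot, LinearMap.ker_eq_bot']
      intro z hz
      have h1 : N.mulVec (z : _) = 0 := congrArg Subtype.val hz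
      have h2 := hN2 _ (hWU _ z.2)
      rw [h1, Matrix.mulVec_zero] at h2
      have h3 : (lam ^ 2 * mu ^ 2) • (z : (Fin s ⊕ Fin t) × Fin m → ℝ) = 0 := by
        rw [← neg_eq_zero, ← h2]
      rcases smul_eq_zero.mp h3 with h | h
      · exact absurd h (by positivity)
      · exact Subtype.ext h
    exact LinearMap.finrank_le_finrank_of_injective hinj
  have hpm : Module.finrank ℝ Kp ≤ Module.finrank ℝ Km := by
    refine hstepC Kp Km ?_ (fun z hz => ((memKp z).mp hz).2)
    intro z hz
    obtain ⟨hz1, hzU⟩ := (memKp z).mp hz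
    refine (memKm _).mpr ⟨?_, hNU _ hzU⟩
    rw [hMN, hz1, Matrix.mulVec_smul]
  have hmp : Module.finrank ℝ Km ≤ Module.finrank ℝ Kp := by
    refine hstepC Km Kp ?_ (fun z hz => ((memKm z).mp hz).2)
    intro z hz
    obtain ⟨hz1, hzU⟩ := (memKm z).mp hz
    refine (memKp _).mpr ⟨?_, hNU _ hzU⟩
    rw [hMN, hz1]
    funext pr
    simp only [Matrix.mulVec_neg, Matrix.mulVec_smul, Pi.neg_apply, Pi.smul_apply, smul_eq_mul]
    ring
  -- conclusion
  have hKpLe : Module.finrank ℝ Kp ≤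
      Module.finrank ℝ (LinearMap.ker ((𝒜' - c • 1).mulVecLin)) :=
    Submodule.finrank_mono inf_le_left
  have hKmLe : Module.finrank ℝ Km ≤
      Module.finrank ℝ (LinearMap.ker ((𝒜' + c • 1).mulVecLin)) :=
    Submodule.finrank_mono inf_le_left
  constructor
  · calc p * q ≤ Module.finrank ℝ U := hUdim
      _ ≤ Module.finrank ℝ Kp + Module.finrank ℝ Km := hBsum
      _ ≤ Module.finrank ℝ Kp + Module.finrank ℝ Kp := by omega
      _ = 2 * Module.finrank ℝ Kp := by ring
      _ ≤ 2 * Module.finrank ℝ (LinearMap.ker ((𝒜' - c • 1).mulVecLin)) := by omega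
  · calc p * q ≤ Module.finrank ℝ U := hUdim
      _ ≤ Module.finrank ℝ Kp + Module.finrank ℝ Km := hBsum
      _ ≤ Module.finrank ℝ Km + Module.finrank ℝ Km := by omega
      _ = 2 * Module.finrank ℝ Km := by ring
      _ ≤ 2 * Module.finrank ℝ (LinearMap.ker ((𝒜' + c • 1).mulVecLin)) := by omega
end

section
/- Let θ₁, θ₂ > 0 be real numbers, let A₁ be an n×n signed bipartite adjacency matrix with parts of sizes s and n−s satisfying A₁² = θ₁²·I_n (n ≥ 1), and let A₂ be an m×m signed adjacency matrix satisfying A₂² = θ₂²·I_m (m ≥ 1). Set 𝒜 = A₁⊗I_m + D⊗A₂ and 𝒜' = (A₁+D)⊗A₂ with D = diag(I_s, −I_{n−s}). Then 𝒜² = (θ₁² + θ₂²)·I_{mn} and (𝒜')² = (θ₁² + 1)θ₂²·I_{mn}; moreover the set of eigenvalues of 𝒜 is exactly {√(θ₁²+θ₂²), −√(θ₁²+θ₂²)} and the set of eigenvalues of 𝒜' is exactly {√((θ₁²+1)θ₂²), −√((θ₁²+1)θ₂²)} (each value is attained). -/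
open Matrix Kronecker

lemma spectrum_of_sq_eq_smul_one {ι : Type*} [Fintype ι] [DecidableEq ι] [Nonempty ι]
    (M : Matrix ι ι ℝ) (c : ℝ) (hc : 0 < c)
    (hsq : M * M = c • 1) (htr : M.trace = 0) :
    spectrum ℝ M = {Real.sqrt c, -Real.sqrt c} := by
  set r := Real.sqrt c with hrdef
  have hr : 0 < r := Real.sqrt_pos.mpr hc
  have hr2 : r ^ 2 = c := Real.sq_sqrt hc.le
  have key : ∀ μ : ℝ, (μ • (1 : Matrix ι ι ℝ) - M) * (μ • 1 + M) = (μ ^ 2 - c) • 1 := by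
    intro μ
    rw [sub_mul, mul_add, mul_add, smul_mul_assoc, smul_mul_assoc, one_mul, one_mul,
      mul_smul_comm, mul_one, hsq, sub_smul, smul_smul, ← pow_two]
    abel
  have halg : ∀ μ : ℝ, algebraMap ℝ (Matrix ι ι ℝ) μ = μ • 1 := fun μ =>
    Algebra.algebraMap_eq_smul_one μ
  have hcard : (0 : ℝ) < (Fintype.card ι : ℝ) := by
    exact_mod_cast Fintype.card_pos
  ext μ
  simp only [Set.mem_insert_iff, Set.mem_singleton_iff]
  rw [spectrum.mem_iff]
  constructor
  · intro h
    by_contra hne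
    push_neg at hne
    apply h
    rw [halg, Matrix.isUnit_iff_isUnit_det]
    have hdet : (( μ ^ 2 - c) • (1 : Matrix ι ι ℝ)).det ≠ 0 := by
      rw [Matrix.det_smul, Matrix.det_one, mul_one]
      have : μ ^ 2 - c ≠ 0 := by
        intro h0
        have : (μ - r) * (μ + r) = 0 := by nlinarith
        rcases mul_eq_zero.mp this with h1 | h1
        · exact hne.1 (by linarith)
        · exact hne.2 (by linarith)
      exact pow_ne_zero _ this
    rw [← key μ, Matrix.det_mul] at hdet
    exact isUnit_iff_ne_zero.mpr (left_ne_zero_of_mul hdet)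
  · rintro (rfl | rfl) hu
    · rw [halg] at hu
      have h0 : (r • (1 : Matrix ι ι ℝ) - M) * (r • 1 + M) = 0 := by
        rw [key, hr2, sub_self, zero_smul]
      have hz : r • (1 : Matrix ι ι ℝ) + M = 0 :=
        hu.mul_left_cancel (by rw [h0, mul_zero])
      have hM : M = -(r • 1) := by linear_combination (norm := abel) hz
      have : M.trace = -(r * Fintype.card ι) := by
        rw [hM, Matrix.trace_neg, Matrix.trace_smul, Matrix.trace_one]
        simp [smul_eq_mul]
      rw [htr] at this
      nlinarith
    · rw [halg] at hu
      have h0 : ((-r) • (1 : Matrix ι ι ℝ) - M) * ((-r) • 1 + M) = 0 := by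
        rw [key]
        simp [hr2]
      have hz : (-r) • (1 : Matrix ι ι ℝ) + M = 0 :=
        hu.mul_left_cancel (by rw [h0, mul_zero])
      have hM : M = r • 1 := by
        have : M = -((-r) • (1 : Matrix ι ι ℝ)) := by
          linear_combination (norm := abel) hz
        simpa using this
      have : M.trace = r * Fintype.card ι := by
        rw [hM, Matrix.trace_smul, Matrix.trace_one]; simp [smul_eq_mul]
      rw [htr] at this
      nlinarith

/-- If `A₁` is an `n × n` (`n ≥ 1`) signed bipartite adjacency matrix with `A₁² = θ₁² I_n` and
`A₂` is an `m × m` (`m ≥ 1`) signed adjacency matrix with `A₂² = θ₂² I_m`, then the signed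
Cartesian product `𝒜 = A₁ ⊗ I_m + D ⊗ A₂` satisfies `𝒜² = (θ₁² + θ₂²) I` and has spectrum
exactly `{√(θ₁²+θ₂²), −√(θ₁²+θ₂²)}`, and the signed semi-strong product `𝒜' = (A₁+D) ⊗ A₂`
satisfies `(𝒜')² = (θ₁²+1)θ₂² I` and has spectrum exactly
`{√((θ₁²+1)θ₂²), −√((θ₁²+1)θ₂²)}`. -/
theorem signed_products_two_distinct_eigenvalues (s t m : ℕ)
    (hn : 1 ≤ s + t) (hm : 1 ≤ m)
    (θ₁ θ₂ : ℝ) (hθ₁ : 0 < θ₁) (hθ₂ : 0 < θ₂)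
    (P : Matrix (Fin s) (Fin t) ℝ)
    (hP : ∀ i j, P i j = -1 ∨ P i j = 0 ∨ P i j = 1)
    (A₂ : Matrix (Fin m) (Fin m) ℝ)
    (hA₂symm : A₂.IsSymm) (hA₂diag : ∀ i, A₂ i i = 0)
    (hA₂ent : ∀ i j, A₂ i j = -1 ∨ A₂ i j = 0 ∨ A₂ i j = 1)
    (A₁ : Matrix (Fin s ⊕ Fin t) (Fin s ⊕ Fin t) ℝ)
    (hA₁ : A₁ = Matrix.fromBlocks 0 P Pᵀ 0)
    (hA₁sq : A₁ * A₁ = (θ₁ ^ 2) • (1 : Matrix (Fin s ⊕ Fin t) (Fin s ⊕ Fin t) ℝ))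
    (hA₂sq : A₂ * A₂ = (θ₂ ^ 2) • (1 : Matrix (Fin m) (Fin m) ℝ))
    (D : Matrix (Fin s ⊕ Fin t) (Fin s ⊕ Fin t) ℝ)
    (hD : D = Matrix.fromBlocks 1 0 0 (-1))
    (𝒜 𝒜' : Matrix ((Fin s ⊕ Fin t) × Fin m) ((Fin s ⊕ Fin t) × Fin m) ℝ)
    (h𝒜 : 𝒜 = A₁ ⊗ₖ (1 : Matrix (Fin m) (Fin m) ℝ) + D ⊗ₖ A₂)
    (h𝒜' : 𝒜' = (A₁ + D) ⊗ₖ A₂) :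
    𝒜 * 𝒜 = (θ₁ ^ 2 + θ₂ ^ 2) •
      (1 : Matrix ((Fin s ⊕ Fin t) × Fin m) ((Fin s ⊕ Fin t) × Fin m) ℝ) ∧
    𝒜' * 𝒜' = ((θ₁ ^ 2 + 1) * θ₂ ^ 2) •
      (1 : Matrix ((Fin s ⊕ Fin t) × Fin m) ((Fin s ⊕ Fin t) × Fin m) ℝ) ∧
    spectrum ℝ 𝒜 = {Real.sqrt (θ₁ ^ 2 + θ₂ ^ 2), -Real.sqrt (θ₁ ^ 2 + θ₂ ^ 2)} ∧
    spectrum ℝ 𝒜' = {Real.sqrt ((θ₁ ^ 2 + 1) * θ₂ ^ 2),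
      -Real.sqrt ((θ₁ ^ 2 + 1) * θ₂ ^ 2)} := by
  haveI : Nonempty ((Fin s ⊕ Fin t) × Fin m) := by
    rw [← Fintype.card_pos_iff]
    simp only [Fintype.card_prod, Fintype.card_sum, Fintype.card_fin]
    exact Nat.mul_pos hn hm
  -- anticommutation
  have hAD : A₁ * D + D * A₁ = 0 := by
    rw [hA₁, hD]
    ext (i | i) (j | j) <;>
      simp [Matrix.fromBlocks_multiply, Matrix.add_apply]
  have hD2 : D * D = 1 := by
    rw [hD]
    simp [Matrix.fromBlocks_multiply, ← Matrix.fromBlocks_one]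
  -- squares
  have hsq1 : 𝒜 * 𝒜 = (θ₁ ^ 2 + θ₂ ^ 2) • 1 := by
    rw [h𝒜, add_mul, mul_add, mul_add, ← Matrix.mul_kronecker_mul,
      ← Matrix.mul_kronecker_mul, ← Matrix.mul_kronecker_mul, ← Matrix.mul_kronecker_mul,
      hA₁sq, hA₂sq, hD2]
    simp only [mul_one, one_mul]
    have hmid : (A₁ * D) ⊗ₖ A₂ + (D * A₁) ⊗ₖ A₂ = (0 : Matrix _ _ ℝ) := by
      rw [← Matrix.add_kronecker, hAD, Matrix.zero_kronecker]
    rw [add_assoc, ← add_assoc ((A₁ * D) ⊗ₖ A₂), hmid, zero_add]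
    rw [Matrix.smul_kronecker, Matrix.kronecker_smul, Matrix.one_kronecker_one,
      ← add_smul]
  have hsum : (A₁ + D) * (A₁ + D) = (θ₁ ^ 2 + 1) • 1 := by
    rw [add_mul, mul_add, mul_add, hA₁sq, hD2, add_assoc,
      ← add_assoc (A₁ * D), hAD, zero_add, add_smul, one_smul]
  have hsq2 : 𝒜' * 𝒜' = ((θ₁ ^ 2 + 1) * θ₂ ^ 2) • 1 := by
    rw [h𝒜', ← Matrix.mul_kronecker_mul, hsum, hA₂sq, Matrix.smul_kronecker,
      Matrix.kronecker_smul, Matrix.one_kronecker_one, smul_smul]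
  -- traces
  have htrA₁ : A₁.trace = 0 := by
    rw [hA₁]
    simp [Matrix.trace, Matrix.diag, Fintype.sum_sum_type]
  have htrA₂ : A₂.trace = 0 := by
    simp [Matrix.trace, Matrix.diag, hA₂diag]
  have htr1 : 𝒜.trace = 0 := by
    rw [h𝒜, Matrix.trace_add, Matrix.trace_kronecker, Matrix.trace_kronecker,
      htrA₁, htrA₂, zero_mul, mul_zero, add_zero]
  have htr2 : 𝒜'.trace = 0 := by
    rw [h𝒜', Matrix.trace_kronecker, htrA₂, mul_zero]
  have hc1 : (0:ℝ) < θ₁ ^ 2 + θ₂ ^ 2 := by positivity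
  have hc2 : (0:ℝ) < (θ₁ ^ 2 + 1) * θ₂ ^ 2 := by positivity
  exact ⟨hsq1, hsq2, spectrum_of_sq_eq_smul_one 𝒜 _ hc1 hsq1 htr1,
    spectrum_of_sq_eq_smul_one 𝒜' _ hc2 hsq2 htr2⟩
end
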